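/- arXiv:1508.00634 — 9 statements merged into one kernel-verified Lean document; each statement's English description precedes it below -/
import Mathlib

section
/- Let G be a graph, μ a probability measure on V(G), δ > 0, and X ⊆ V(G) with μ(X) > 3δ. Then either there exists a set P ⊆ X such that there are no edges between P and X \ P, and μ(P) > δ and μ(X \ P) > δ; or the vertex set of the largest connected component of the induced subgraph G[X] has measure at least μ(X) − δ. -/
open SimpleGraph Finset

lemma key_comp {V : Type*} [Fintype V] [DecidableEq V] (G : SimpleGraph V)
    (Y : Finset V) (v : V) (hv : v ∈ Y) :
    ∃ C : Finset V, C ⊆ Y ∧ v ∈ C ∧ (G.induce (C : Set V)).Connected ∧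
      ∀ p ∈ C, ∀ q ∈ Y, q ∉ C → ¬ G.Adj p q := by
  classical
  set H : SimpleGraph (Y : Set V) := G.induce (Y : Set V) with hH
  set C : Finset V := Y.filter
    (fun w => ∃ h : w ∈ Y, H.Reachable ⟨v, hv⟩ ⟨w, h⟩) with hC
  have memC : ∀ w, w ∈ C ↔ ∃ h : w ∈ Y, H.Reachable ⟨v, hv⟩ ⟨w, h⟩ := by
    intro w
    simp only [hC, Finset.mem_filter]
    exact ⟨fun h => h.2, fun h => ⟨h.1, h⟩⟩
  have hCY : C ⊆ Y := Finset.filter_subset _ _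
  have hvC : v ∈ C := (memC v).2 ⟨hv, Reachable.refl _⟩
  refine ⟨C, hCY, hvC, ?_, ?_⟩
  · -- connectivity
    rw [connected_induce_iff, Subgraph.connected_iff_forall_exists_walk_subgraph]
    constructor
    · exact ⟨v, by simpa using hvC⟩
    · intro a b ha hb
      simp only [Subgraph.induce_verts, Subgraph.verts_top, Finset.mem_coe] at ha hb
      obtain ⟨haY, hra⟩ := (memC a).1 ha
      obtain ⟨hbY, hrb⟩ := (memC b).1 hb
      obtain ⟨q⟩ := hra.symm.trans hrb
      let f : H ↪g G := SimpleGraph.Embedding.comap (Function.Embedding.subtype _) G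
      refine ⟨q.map f.toHom, (q.map f.toHom).toSubgraph_le_induce_support.trans
        (Subgraph.induce_mono_right ?_)⟩
      intro x hx
      simp only [Set.mem_setOf_eq, Walk.support_map, List.mem_map] at hx
      obtain ⟨x', hx', rfl⟩ := hx
      have : H.Reachable ⟨a, haY⟩ x' := ⟨q.takeUntil x' hx'⟩
      exact (memC _).2 ⟨x'.2, hra.trans this⟩
  · -- closure
    intro p hp q hqY hqC hadj
    obtain ⟨hpY, hrp⟩ := (memC p).1 hp
    have : H.Adj ⟨p, hpY⟩ ⟨q, hqY⟩ := hadj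
    exact hqC ((memC q).2 ⟨hqY, hrp.trans this.reachable⟩)

/-- Lemma 2.1 (Erdős–Hajnal for hooks paper): for a graph `G`, a probability
measure `μ` on its vertices, `δ > 0`, and a vertex set `X` with `μ(X) > 3δ`,
either there is `P ⊆ X` with no edges between `P` and `X \ P` and both parts of
measure `> δ`, or some connected component of `G[X]` has measure `≥ μ(X) - δ`. -/
theorem stmt_0 {V : Type*} [Fintype V] [DecidableEq V] (G : SimpleGraph V)
    (μ : V → ℝ) (hμ0 : ∀ v, 0 ≤ μ v) (hμ1 : ∑ v, μ v = 1)
    (δ : ℝ) (hδ : 0 < δ) (X : Finset V) (hX : 3 * δ < ∑ v ∈ X, μ v) :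
    (∃ P : Finset V, P ⊆ X ∧
      (∀ p ∈ P, ∀ q ∈ X \ P, ¬ G.Adj p q) ∧
      δ < ∑ v ∈ P, μ v ∧ δ < ∑ v ∈ X \ P, μ v) ∨
    (∃ C : Finset V, C ⊆ X ∧ C.Nonempty ∧ (G.induce (C : Set V)).Connected ∧
      (∀ p ∈ C, ∀ q ∈ X \ C, ¬ G.Adj p q) ∧
      (∑ v ∈ X, μ v) - δ ≤ ∑ v ∈ C, μ v) := by
  classical
  set S : Finset (Finset V) := X.powerset.filter
    (fun P => (∀ p ∈ P, ∀ q ∈ X \ P, ¬ G.Adj p q) ∧ ∑ v ∈ P, μ v ≤ δ) with hS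
  have hmem : ∀ P, P ∈ S ↔ P ⊆ X ∧ (∀ p ∈ P, ∀ q ∈ X \ P, ¬ G.Adj p q) ∧
      ∑ v ∈ P, μ v ≤ δ := by
    intro P; simp [hS, and_assoc]
  have hSne : S.Nonempty := ⟨∅, (hmem ∅).2 ⟨Finset.empty_subset _, by simp, by simp [hδ.le]⟩⟩
  obtain ⟨P, hPS, hPmax⟩ := S.exists_max_image Finset.card hSne
  obtain ⟨hPX, hPcl, hPμ⟩ := (hmem P).1 hPS
  have hsdiff : ∑ v ∈ X \ P, μ v + ∑ v ∈ P, μ v = ∑ v ∈ X, μ v := Finset.sum_sdiff hPX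
  have hYμ : 2 * δ < ∑ v ∈ X \ P, μ v := by linarith
  have hYne : (X \ P).Nonempty := by
    by_contra h
    rw [Finset.not_nonempty_iff_eq_empty] at h
    rw [h] at hYμ; simp at hYμ; linarith
  obtain ⟨v, hv⟩ := hYne
  obtain ⟨C, hCY, hvC, hCconn, hCcl⟩ := key_comp G (X \ P) v hv
  have hCX : C ⊆ X := hCY.trans (Finset.sdiff_subset)
  have hCP : Disjoint C P := by
    refine Finset.disjoint_left.2 fun a ha hap => ?_
    exact (Finset.mem_sdiff.1 (hCY ha)).2 hap
  -- C is closed in X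
  have hCclX : ∀ p ∈ C, ∀ q ∈ X \ C, ¬ G.Adj p q := by
    intro p hp q hq hadj
    rw [Finset.mem_sdiff] at hq
    by_cases hqP : q ∈ P
    · exact hPcl q hqP p (hCY hp) hadj.symm
    · exact hCcl p hp q (Finset.mem_sdiff.2 ⟨hq.1, hqP⟩) hq.2 hadj
  have hCsum : ∑ v ∈ (X \ P) \ C, μ v + ∑ v ∈ C, μ v = ∑ v ∈ X \ P, μ v :=
    Finset.sum_sdiff hCY
  have hCnn : (0:ℝ) ≤ ∑ v ∈ (X \ P) \ C, μ v := Finset.sum_nonneg fun i _ => hμ0 i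
  have hXC : ∑ v ∈ X \ C, μ v + ∑ v ∈ C, μ v = ∑ v ∈ X, μ v := Finset.sum_sdiff hCX
  by_cases h1 : ∑ v ∈ X, μ v - δ ≤ ∑ v ∈ C, μ v
  · exact Or.inr ⟨C, hCX, ⟨v, hvC⟩, hCconn, hCclX, h1⟩
  push_neg at h1
  by_cases h2 : δ < ∑ v ∈ C, μ v
  · exact Or.inl ⟨C, hCX, hCclX, h2, by linarith⟩
  push_neg at h2
  -- else: P ∪ C
  refine Or.inl ⟨P ∪ C, Finset.union_subset hPX hCX, ?_, ?_, ?_⟩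
  · intro p hp q hq hadj
    rw [Finset.mem_sdiff] at hq
    have hqP : q ∉ P := fun h => hq.2 (Finset.mem_union_left _ h)
    have hqC : q ∉ C := fun h => hq.2 (Finset.mem_union_right _ h)
    rcases Finset.mem_union.1 hp with hp | hp
    · exact hPcl p hp q (Finset.mem_sdiff.2 ⟨hq.1, hqP⟩) hadj
    · exact hCclX p hp q (Finset.mem_sdiff.2 ⟨hq.1, hqC⟩) hadj
  · -- μ(P ∪ C) > δ by maximality
    by_contra hle
    push_neg at hle
    have hmemPC : P ∪ C ∈ S := (hmem _).2 ⟨Finset.union_subset hPX hCX, ?_, hle⟩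
    · have := hPmax _ hmemPC
      have hcard : (P ∪ C).card = P.card + C.card := Finset.card_union_of_disjoint hCP.symm
      have : 0 < C.card := Finset.card_pos.2 ⟨v, hvC⟩
      omega
    · intro p hp q hq hadj
      rw [Finset.mem_sdiff] at hq
      have hqP : q ∉ P := fun h => hq.2 (Finset.mem_union_left _ h)
      have hqC : q ∉ C := fun h => hq.2 (Finset.mem_union_right _ h)
      rcases Finset.mem_union.1 hp with hp | hp
      · exact hPcl p hp q (Finset.mem_sdiff.2 ⟨hq.1, hqP⟩) hadj
      · exact hCclX p hp q (Finset.mem_sdiff.2 ⟨hq.1, hqC⟩) hadj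
  · have hUC : ∑ v ∈ X \ (P ∪ C), μ v + ∑ v ∈ P ∪ C, μ v = ∑ v ∈ X, μ v :=
      Finset.sum_sdiff (Finset.union_subset hPX hCX)
    have hPCsum : ∑ v ∈ P ∪ C, μ v = ∑ v ∈ P, μ v + ∑ v ∈ C, μ v :=
      Finset.sum_union hCP.symm
    linarith
end

section
/- Let 0 < δ ≤ 1/4, let G be a graph, let μ be a probability measure on V(G), and let (T, β) be a tree decomposition of G. Then either there is an anti-adjacent pair (P, Q) of disjoint vertex sets in G with μ(P) > δ and μ(Q) > δ, or there is a node t of T whose bag satisfies μ(β(t)) ≥ 1/2 − δ. -/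
/-!
Deleting a node `t` of `T` splits the vertices outside `β t` into branches, one for each
component of `T - t`; as every edge of `G` lies in a bag, distinct branches are anti-adjacent.
Some node is central: each of its branches has at most half the measure. Otherwise, stepping
from every node into its heavy branch, the heavy branches are nested (the two sides of an edge are
disjoint, so they cannot both be heavy), hence eventually constant, and a vertex in all of them
would force the distance from the current node to one of its bags to decrease forever.
If the central bag has measure `< 1/2 - δ`, the branches carry more than `1/2 + δ`. Either one
branch has measure `> δ`, or all are at most `δ` and greedily collecting them yields a group of
measure in `(δ, 2δ]`; as `2δ ≤ 1/2`, in both cases the group and the remaining branches form the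
anti-adjacent pair.
-/

open Finset

namespace SimpleGraph

variable {ι : Type*} {T : SimpleGraph ι}

def ReachableAvoiding (T : SimpleGraph ι) (t x y : ι) : Prop :=
  ∃ p : T.Walk x y, t ∉ p.support

namespace ReachableAvoiding

variable {t t' x y z : ι}

lemma ne_left (h : T.ReachableAvoiding t x y) : x ≠ t := by
  rintro rfl
  obtain ⟨p, hp⟩ := h
  exact hp p.start_mem_support

lemma refl (hx : x ≠ t) : T.ReachableAvoiding t x x :=
  ⟨.nil, by simpa using hx.symm⟩

lemma symm (h : T.ReachableAvoiding t x y) : T.ReachableAvoiding t y x :=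
  let ⟨p, hp⟩ := h
  ⟨p.reverse, by simpa using hp⟩

lemma trans (hxy : T.ReachableAvoiding t x y) (hyz : T.ReachableAvoiding t y z) :
    T.ReachableAvoiding t x z := by
  obtain ⟨p, hp⟩ := hxy
  obtain ⟨q, hq⟩ := hyz
  refine ⟨p.append q, ?_⟩
  rw [Walk.support_append, List.mem_append, not_or]
  exact ⟨hp, fun h => hq (List.mem_of_mem_tail h)⟩

lemma of_adj (h : T.Adj x y) (hx : x ≠ t) (hy : y ≠ t) : T.ReachableAvoiding t x y :=
  ⟨h.toWalk, by simp [hx.symm, hy.symm]⟩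

lemma exists_adj (hT : T.Preconnected) (hx : x ≠ t) :
    ∃ t', T.Adj t t' ∧ T.ReachableAvoiding t t' x := by
  obtain ⟨p, hp, -⟩ := (hT t x).exists_path_of_dist
  cases p with
  | nil => exact absurd rfl hx
  | cons h p => exact ⟨_, h, p, (Walk.cons_isPath_iff h p).mp hp |>.2⟩

lemma not_and_of_adj (hT : T.IsAcyclic) (h : T.Adj t t') :
    ¬ (T.ReachableAvoiding t t' x ∧ T.ReachableAvoiding t' t x) := by
  rintro ⟨⟨p, hp⟩, ⟨q, hq⟩⟩
  have := isBridge_iff_forall_walk_mem_edges.mp (isAcyclic_iff_forall_adj_isBridge.mp hT h)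
    (q.append p.reverse)
  rw [Walk.edges_append, List.mem_append, Walk.edges_reverse, List.mem_reverse] at this
  rcases this with h | h
  · exact hq (q.snd_mem_support_of_mem_edges h)
  · exact hp (p.fst_mem_support_of_mem_edges h)

lemma or_of_adj (hT : T.Preconnected) (h : T.Adj t t') (hx : x ≠ t) :
    T.ReachableAvoiding t t' x ∨ T.ReachableAvoiding t' t x := by
  obtain ⟨q⟩ := hT x t
  suffices T.ReachableAvoiding t x t' ∨ T.ReachableAvoiding t' x t from this.imp symm symm
  induction q with
  | nil => exact absurd rfl hx
  | @cons x y t hxy q ih =>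
    obtain rfl | hxt' := eq_or_ne x t'
    · exact .inl (refl h.ne')
    obtain rfl | hy := eq_or_ne y t
    · exact .inr (of_adj hxy hxt' h.ne)
    rcases ih h hy with hr | hr
    · exact .inl ((of_adj hxy hx hy).trans hr)
    · exact .inr ((of_adj hxy hxt' hr.ne_left).trans hr)

lemma dist_lt (hT : T.IsTree) (h : T.Adj t t') (hr : T.ReachableAvoiding t t' x) :
    T.dist t' x < T.dist t x := by
  classical
  obtain ⟨p, hp⟩ := hr
  by_contra! hle
  have hdist : T.dist t' x = T.dist t x + 1 := by
    have := hT.dist_eq_dist_add_one_of_adj x h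
    rw [dist_comm, dist_comm (u := x)] at this
    omega
  obtain ⟨q, -, hq⟩ := hT.connected.exists_path_of_dist t x
  have hqp : (Walk.cons h.symm q).IsPath :=
    Walk.isPath_of_length_eq_dist _ (by rw [Walk.length_cons, hq, hdist])
  have := (hT.existsUnique_path t' x).unique hqp p.bypass_isPath
  refine hp (p.support_bypass_subset_support ?_)
  rw [← this]
  simp

end ReachableAvoiding

section Branch

variable {V : Type*} {β : ι → Finset V} {t t' s s' x y : ι} {v : V}

lemma reachableAvoiding_of_mem (hsub : ∀ v, (T.induce {t | v ∈ β t}).Preconnected)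
    (hv : v ∉ β t) (hx : v ∈ β x) (hy : v ∈ β y) : T.ReachableAvoiding t x y := by
  obtain ⟨q⟩ := hsub v ⟨x, hx⟩ ⟨y, hy⟩
  have hq := Walk.support_map (Embedding.induce {t | v ∈ β t}).toHom q
  refine ⟨q.map (Embedding.induce _).toHom, fun ht => ?_⟩
  obtain ⟨⟨z, hz⟩, -, rfl⟩ := List.mem_map.1 (hq ▸ ht)
  exact hv hz

variable [Fintype V]

open scoped Classical in
noncomputable def branch (T : SimpleGraph ι) (β : ι → Finset V) (t s : ι) : Finset V :=
  {v | v ∉ β t ∧ ∃ x, v ∈ β x ∧ T.ReachableAvoiding t s x}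

lemma mem_branch : v ∈ T.branch β t s ↔ v ∉ β t ∧ ∃ x, v ∈ β x ∧ T.ReachableAvoiding t s x := by
  simp [branch]

lemma mem_branch_of_mem (hv : v ∉ β t) (hx : v ∈ β x) : v ∈ T.branch β t x :=
  mem_branch.2 ⟨hv, x, hx, .refl fun h => hv (h ▸ hx)⟩

lemma branch_congr (h : T.ReachableAvoiding t s s') : T.branch β t s = T.branch β t s' := by
  ext v
  simp only [mem_branch]
  exact and_congr_right fun _ => exists_congr fun x =>
    and_congr_right fun _ => ⟨h.symm.trans, h.trans⟩

lemma exists_adj_branch_eq (hT : T.Preconnected) (hv : v ∈ T.branch β t s) :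
    ∃ t', T.Adj t t' ∧ T.branch β t s = T.branch β t t' := by
  obtain ⟨-, x, -, hr⟩ := mem_branch.1 hv
  obtain ⟨t', h, hr'⟩ := ReachableAvoiding.exists_adj hT hr.ne_left
  exact ⟨t', h, branch_congr hr'.symm⟩

variable (hsub : ∀ v, (T.induce {t | v ∈ β t}).Preconnected)
include hsub

lemma reachableAvoiding_of_mem_branch (hv : v ∈ T.branch β t s) (hx : v ∈ β x) :
    T.ReachableAvoiding t s x := by
  obtain ⟨hvt, y, hy, hr⟩ := mem_branch.1 hv
  exact hr.trans (reachableAvoiding_of_mem hsub hvt hy hx)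

lemma branch_eq_of_mem (hv : v ∉ β t) (hx : v ∈ β x) (hy : v ∈ β y) :
    T.branch β t x = T.branch β t y :=
  branch_congr (reachableAvoiding_of_mem hsub hv hx hy)

lemma disjoint_branch_of_adj (hT : T.IsAcyclic) (h : T.Adj t t') :
    Disjoint (T.branch β t t') (T.branch β t' t) := by
  refine Finset.disjoint_left.2 fun v hv hv' => ?_
  obtain ⟨-, x, hx, hr⟩ := mem_branch.1 hv
  exact ReachableAvoiding.not_and_of_adj hT h ⟨hr, reachableAvoiding_of_mem_branch hsub hv' hx⟩

lemma branch_subset_branch_of_adj (hT : T.Preconnected) (h : T.Adj t t')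
    (hs : ¬ T.ReachableAvoiding t' s t) : T.branch β t' s ⊆ T.branch β t t' := by
  intro v hv
  obtain ⟨hvt', x, hx, hr⟩ := mem_branch.1 hv
  have hvt : v ∉ β t := fun hvt => hs (hr.trans (reachableAvoiding_of_mem hsub hvt' hx hvt))
  refine mem_branch.2 ⟨hvt, x, hx, ?_⟩
  exact (ReachableAvoiding.or_of_adj hT h fun h => hvt (h ▸ hx)).resolve_right
    fun h' => hs (hr.trans h'.symm)

lemma dist_lt_of_mem_branch (hT : T.IsTree) (h : T.Adj t t') (hv : v ∈ T.branch β t t')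
    (hx : v ∈ β x) : T.dist t' x < T.dist t x :=
  ReachableAvoiding.dist_lt hT h (reachableAvoiding_of_mem_branch hsub hv hx)

theorem exists_forall_two_mul_sum_branch_le (hT : T.IsTree) (hbag : ∀ v, ∃ t, v ∈ β t)
    (μ : V → ℝ) (hμ : ∀ v, 0 ≤ μ v) : ∃ t, ∀ s, 2 * ∑ v ∈ T.branch β t s, μ v ≤ ∑ v, μ v := by
  classical
  by_contra! hheavy
  have hnext : ∀ t, ∃ t', T.Adj t t' ∧ ∑ v, μ v < 2 * ∑ v ∈ T.branch β t t', μ v := by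
    intro t
    obtain ⟨s, hs⟩ := hheavy t
    obtain ⟨v, hv⟩ : (T.branch β t s).Nonempty := nonempty_of_sum_ne_zero (f := μ) fun h0 => by
      rw [h0] at hs
      linarith [sum_nonneg fun v (_ : v ∈ univ) => hμ v]
    obtain ⟨t', ht', heq⟩ := exists_adj_branch_eq hT.connected.preconnected hv
    exact ⟨t', ht', heq ▸ hs⟩
  choose next hadj hheavy using hnext
  set H := fun t => T.branch β t (next t)
  -- The heavy branch at `next t` cannot point back to `t`: it would be disjoint from `H t`.
  have hanti : ∀ t, H (next t) ⊆ H t := fun t =>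
    branch_subset_branch_of_adj hsub hT.connected.preconnected (hadj t) fun hr => by
      have hdisj := disjoint_branch_of_adj hsub hT.isAcyclic (hadj t)
      have hle := sum_le_sum_of_subset_of_nonneg (subset_univ (H t ∪ T.branch β (next t) t))
        fun v _ _ => hμ v
      rw [sum_union hdisj, ← branch_congr hr] at hle
      linarith [hheavy t, hheavy (next t)]
  have : Nonempty ι := hT.connected.nonempty
  set t₀ := Function.argmin (fun t => (H t).card)
  obtain ⟨v, hv⟩ : (H t₀).Nonempty := nonempty_of_sum_ne_zero (f := μ) fun h0 => by
    linarith [hheavy t₀, sum_nonneg fun v (_ : v ∈ univ) => hμ v]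
  obtain ⟨x, hx⟩ := hbag v
  -- By minimality `H` stays equal to `H t₀` along `next`, while `next` keeps approaching `x`.
  suffices ∀ n t, T.dist t x = n → H t = H t₀ → False from this _ t₀ rfl rfl
  intro n
  induction n using Nat.strong_induction_on with
  | _ n ih =>
    rintro t rfl hHt
    have hvt : v ∈ H t := hHt ▸ hv
    refine ih _ (dist_lt_of_mem_branch hsub hT (hadj t) hvt hx) (next t) rfl ?_
    exact eq_of_subset_of_card_le ((hanti t).trans hHt.le)
      (Function.argmin_le (fun t => (H t).card) _)

end Branch

end SimpleGraph

namespace Finset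

variable {α β M : Type*}

theorem exists_subset_sum_mem_Ioc [AddCommMonoid M] [LinearOrder M] [IsOrderedAddMonoid M]
    {s : Finset α} {w : α → M} {δ : M} (hδ : 0 ≤ δ) (hw : ∀ a ∈ s, w a ≤ δ)
    (hs : δ < ∑ a ∈ s, w a) : ∃ t ⊆ s, ∑ a ∈ t, w a ∈ Set.Ioc δ (δ + δ) := by
  classical
  induction s using Finset.induction_on with
  | empty => exact absurd hs (by simpa using hδ)
  | insert a s ha ih =>
    by_cases hδs : δ < ∑ a ∈ s, w a
    · obtain ⟨t, hts, ht⟩ := ih (fun b hb => hw b (mem_insert_of_mem hb)) hδs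
      exact ⟨t, hts.trans (subset_insert a s), ht⟩
    · refine ⟨insert a s, subset_rfl, hs, ?_⟩
      rw [sum_insert ha]
      exact add_le_add (hw a (mem_insert_self a s)) (not_lt.mp hδs)

theorem exists_sum_filter_mem_gt_and_sum_filter_not_mem_gt [DecidableEq β] (s : Finset α)
    (f : α → β) (w : α → ℝ) {c δ : ℝ} (hδ : 0 ≤ δ) (hc : 2 * δ ≤ c)
    (hfib : ∀ a ∈ s, ∑ b ∈ s with f b = f a, w b ≤ c) (hs : c + δ < ∑ a ∈ s, w a) :
    ∃ A : Finset β, δ < ∑ a ∈ s with f a ∈ A, w a ∧ δ < ∑ a ∈ s with f a ∉ A, w a := by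
  suffices ∃ A : Finset β, δ < ∑ a ∈ s with f a ∈ A, w a ∧ ∑ a ∈ s with f a ∈ A, w a ≤ c by
    obtain ⟨A, hA, hAc⟩ := this
    refine ⟨A, hA, ?_⟩
    linarith [sum_filter_add_sum_filter_not s (f · ∈ A) w]
  by_cases hbig : ∃ a ∈ s, δ < ∑ b ∈ s with f b = f a, w b
  · obtain ⟨a, ha, hδa⟩ := hbig
    exact ⟨{f a}, by simpa using hδa, by simpa using hfib a ha⟩
  push Not at hbig
  have hsum := sum_fiberwise_of_maps_to (fun a ha => mem_image_of_mem f ha) w (t := s.image f)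
  obtain ⟨A, -, hA, hAc⟩ := exists_subset_sum_mem_Ioc hδ (s := s.image f)
    (w := fun b => ∑ a ∈ s with f a = b, w a) (by simpa using hbig) (by linarith)
  rw [sum_fiberwise_eq_sum_filter] at hA hAc
  exact ⟨A, hA, by linarith⟩

end Finset

open SimpleGraph

/-- Central bag argument: given `0 < δ ≤ 1/4`, a probability measure `μ` on the
vertices of `G` and a tree decomposition `(T, β)` of `G`, either there is an
anti-adjacent pair of measure `> δ` each, or some bag has measure `≥ 1/2 - δ`. -/
theorem stmt_3 {V : Type*} {ι : Type*} [Fintype V] (G : SimpleGraph V)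
    (μ : V → ℝ) (hμ0 : ∀ v, 0 ≤ μ v) (hμ1 : ∑ v, μ v = 1)
    (δ : ℝ) (hδ0 : 0 < δ) (hδ1 : δ ≤ 1 / 4)
    (T : SimpleGraph ι) (β : ι → Finset V)
    (hT : T.IsTree)
    (hbag : ∀ v : V, ∃ t, v ∈ β t)
    (hsub : ∀ v : V, (T.induce {t | v ∈ β t}).Connected)
    (hedge : ∀ u v : V, G.Adj u v → ∃ t, u ∈ β t ∧ v ∈ β t) :
    (∃ P Q : Finset V, Disjoint P Q ∧ (∀ p ∈ P, ∀ q ∈ Q, ¬ G.Adj p q) ∧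
      δ < ∑ v ∈ P, μ v ∧ δ < ∑ v ∈ Q, μ v) ∨
    (∃ t : ι, 1 / 2 - δ ≤ ∑ v ∈ β t, μ v) := by
  classical
  have hsub' v := (hsub v).preconnected
  obtain ⟨t, ht⟩ := exists_forall_two_mul_sum_branch_le hsub' hT hbag μ hμ0
  rcases le_or_gt (1 / 2 - δ) (∑ v ∈ β t, μ v) with hheavy | hlight
  · exact .inr ⟨t, hheavy⟩
  left
  choose node hnode using hbag
  set R := univ \ β t
  have hR : 1 / 2 + δ < ∑ v ∈ R, μ v := by
    rw [sum_sdiff_eq_sub (subset_univ _), hμ1]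
    linarith
  have hfib : ∀ v ∈ R, ∑ w ∈ R with T.branch β t (node w) = T.branch β t (node v), μ w ≤ 1 / 2 :=
    fun v _ => calc
      _ ≤ ∑ w ∈ T.branch β t (node v), μ w := by
        refine sum_le_sum_of_subset_of_nonneg (fun w hw => ?_) fun w _ _ => hμ0 w
        obtain ⟨hwR, hw⟩ := mem_filter.1 hw
        exact hw ▸ mem_branch_of_mem (mem_sdiff.1 hwR).2 (hnode w)
      _ ≤ 1 / 2 := by linarith [ht (node v)]
  obtain ⟨A, hPA, hQA⟩ := exists_sum_filter_mem_gt_and_sum_filter_not_mem_gt R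
    (fun v => T.branch β t (node v)) μ hδ0.le (by linarith) hfib hR
  refine ⟨_, _, disjoint_filter_filter_not R R _, fun p hp q hq hpq => ?_, hPA, hQA⟩
  obtain ⟨hpR, hpA⟩ := mem_filter.1 hp
  obtain ⟨hqR, hqA⟩ := mem_filter.1 hq
  obtain ⟨x, hpx, hqx⟩ := hedge p q hpq
  refine hqA ?_
  rwa [branch_eq_of_mem hsub' (mem_sdiff.1 hqR).2 (hnode q) hqx,
    ← branch_eq_of_mem hsub' (mem_sdiff.1 hpR).2 (hnode p) hpx]
end

section
/- Let δ₁ = 1/14. For every multigraph H, its line graph G = L(H), and every probability measure μ on V(G) = E(H), there exists either a clique K in G with μ(K) ≥ 3δ₁, or an anti-adjacent pair (P, Q) in G with μ(P) > δ₁ and μ(Q) > δ₁. -/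
/-- The line graph of a multigraph: the multigraph is given by its edge type `E`,
vertex type `W`, and the endpoints map `ends : E → Sym2 W`; two distinct edges are
adjacent in the line graph iff they share an endpoint. -/
def multigraphLineGraph {W E : Type*} (ends : E → Sym2 W) : SimpleGraph E :=
  SimpleGraph.fromRel (fun e f => ∃ w : W, w ∈ ends e ∧ w ∈ ends f)


private def chi {I : Type*} (i : I) (σ : I → Bool) : ℝ := if σ i then 1 else -1

private lemma aux_main {E I : Type*} [Fintype E] [Fintype I] [DecidableEq I]
    (μ : E → ℝ) (hμ0 : ∀ e, 0 ≤ μ e) (hμ1 : ∑ e, μ e = 1)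
    (c1 c2 : E → I) (hc : ∀ e, c1 e ≠ c2 e)
    (hstar : ∀ x : I,
      ∑ f ∈ Finset.univ.filter (fun f => x = c1 f ∨ x = c2 f), μ f ≤ 3 / 14)
    (hsplit : ∀ σ : I → Bool,
      1 / 14 < ∑ e ∈ Finset.univ.filter
          (fun e => σ (c1 e) = true ∧ σ (c2 e) = true), μ e →
      ∑ e ∈ Finset.univ.filter
          (fun e => σ (c1 e) = false ∧ σ (c2 e) = false), μ e ≤ 1 / 14) :
    False := by
  classical
  set N : ℝ := (Fintype.card (I → Bool) : ℝ) with hNdef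
  have hNE : Nonempty (I → Bool) := ⟨fun _ => true⟩
  have hN0 : 0 < N := by
    rw [hNdef]; exact_mod_cast Fintype.card_pos (α := I → Bool)
  -- orthogonality of characters
  have hflip : ∀ i : I, Function.Involutive
      (fun σ : I → Bool => Function.update σ i (!(σ i))) := by
    intro i σ
    funext v
    rcases eq_or_ne v i with rfl | hv
    · simp
    · simp [Function.update_of_ne hv]
  have hkey : ∀ i j : I, (∑ σ : I → Bool, chi i σ * chi j σ)
      = if i = j then N else 0 := by
    intro i j
    rcases eq_or_ne i j with rfl | hij
    · simp only [if_pos rfl]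
      have : ∀ σ : I → Bool, chi i σ * chi i σ = 1 := by
        intro σ; unfold chi; cases h : σ i <;> simp
      rw [Fintype.sum_congr _ _ this]
      simp [hNdef, Finset.card_univ]
    · rw [if_neg hij]
      have hcomp := Equiv.sum_comp ((hflip i).toPerm _)
        (fun σ => chi i σ * chi j σ)
      have hpt : ∀ σ : I → Bool,
          chi i (((hflip i).toPerm _) σ) * chi j (((hflip i).toPerm _) σ)
            = -(chi i σ * chi j σ) := by
        intro σ
        have hval : (((hflip i).toPerm _) σ : I → Bool)
            = Function.update σ i (!(σ i)) := rfl
        have h1 : chi i (Function.update σ i (!(σ i))) = -(chi i σ) := by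
          unfold chi; cases h : σ i <;> simp [h]
        have h2 : chi j (Function.update σ i (!(σ i))) = chi j σ := by
          unfold chi; rw [Function.update_of_ne (Ne.symm hij)]
        rw [hval, h1, h2]; ring
      rw [Fintype.sum_congr _ _ hpt] at hcomp
      rw [Finset.sum_neg_distrib] at hcomp
      linarith
  -- the two weights
  set p : (I → Bool) → ℝ := fun σ => ∑ e ∈ Finset.univ.filter
      (fun e => σ (c1 e) = true ∧ σ (c2 e) = true), μ e with hpdef
  set q : (I → Bool) → ℝ := fun σ => ∑ e ∈ Finset.univ.filter
      (fun e => σ (c1 e) = false ∧ σ (c2 e) = false), μ e with hqdef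
  have hpe : ∀ σ, p σ = ∑ e, μ e *
      (if σ (c1 e) = true ∧ σ (c2 e) = true then (1:ℝ) else 0) := by
    intro σ
    simp only [hpdef]
    rw [Finset.sum_filter]
    exact Finset.sum_congr rfl (fun e _ => by split <;> simp)
  have hqe : ∀ σ, q σ = ∑ e, μ e *
      (if σ (c1 e) = false ∧ σ (c2 e) = false then (1:ℝ) else 0) := by
    intro σ
    simp only [hqdef]
    rw [Finset.sum_filter]
    exact Finset.sum_congr rfl (fun e _ => by split <;> simp)
  -- sum and difference formulas
  have hsumf : ∀ σ, p σ + q σ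
      = ∑ e, μ e * ((1 + chi (c1 e) σ * chi (c2 e) σ) / 2) := by
    intro σ
    rw [hpe, hqe, ← Finset.sum_add_distrib]
    refine Finset.sum_congr rfl (fun e _ => ?_)
    rw [← mul_add]
    congr 1
    unfold chi
    cases h1 : σ (c1 e) <;> cases h2 : σ (c2 e) <;> simp [h1, h2]
  have hdiff : ∀ σ, p σ - q σ
      = ∑ e, μ e * ((chi (c1 e) σ + chi (c2 e) σ) / 2) := by
    intro σ
    rw [hpe, hqe, ← Finset.sum_sub_distrib]
    refine Finset.sum_congr rfl (fun e _ => ?_)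
    rw [← mul_sub]
    congr 1
    unfold chi
    cases h1 : σ (c1 e) <;> cases h2 : σ (c2 e) <;> simp [h1, h2]
  -- expected total
  have hES : (∑ σ : I → Bool, (p σ + q σ)) = N / 2 := by
    calc (∑ σ : I → Bool, (p σ + q σ))
        = ∑ σ : I → Bool, ∑ e, μ e * ((1 + chi (c1 e) σ * chi (c2 e) σ) / 2) :=
          Finset.sum_congr rfl (fun σ _ => hsumf σ)
      _ = ∑ e, ∑ σ : I → Bool, μ e * ((1 + chi (c1 e) σ * chi (c2 e) σ) / 2) :=
          Finset.sum_comm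
      _ = ∑ e, μ e * (N / 2) := by
          refine Finset.sum_congr rfl (fun e _ => ?_)
          rw [← Finset.mul_sum]
          congr 1
          have : (∑ σ : I → Bool, (1 + chi (c1 e) σ * chi (c2 e) σ) / 2)
              = ((∑ σ : I → Bool, (1:ℝ))
                + ∑ σ : I → Bool, chi (c1 e) σ * chi (c2 e) σ) / 2 := by
            rw [← Finset.sum_add_distrib, ← Finset.sum_div]
          rw [this, hkey _ _, if_neg (hc e)]
          simp [hNdef, Finset.card_univ]
      _ = N / 2 := by rw [← Finset.sum_mul, hμ1, one_mul]
  -- second moment of the difference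
  have hrow : ∀ x : I, (∑ f, μ f * ((if x = c1 f then (1:ℝ) else 0)
      + (if x = c2 f then (1:ℝ) else 0))) ≤ 3 / 14 := by
    intro x
    have h1 : ∀ f, μ f * ((if x = c1 f then (1:ℝ) else 0)
        + (if x = c2 f then (1:ℝ) else 0))
        = if (x = c1 f ∨ x = c2 f) then μ f else 0 := by
      intro f
      by_cases ha : x = c1 f <;> by_cases hb : x = c2 f
      · exact absurd (ha.symm.trans hb) (hc f)
      all_goals simp [ha, hb, hc f, Ne.symm (hc f)]
    rw [Finset.sum_congr rfl (fun f _ => h1 f), ← Finset.sum_filter]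
    exact hstar x
  have hDsq : (∑ σ : I → Bool, (p σ - q σ)^2) ≤ 3 / 28 * N := by
    have hstep : ∀ σ, (p σ - q σ)^2
        = (1/4) * ∑ e, ∑ f, (μ e * (chi (c1 e) σ + chi (c2 e) σ))
            * (μ f * (chi (c1 f) σ + chi (c2 f) σ)) := by
      intro σ
      rw [hdiff σ]
      rw [← Finset.sum_mul_sum]
      have : (∑ e, μ e * ((chi (c1 e) σ + chi (c2 e) σ) / 2))
          = (1/2) * ∑ e, μ e * (chi (c1 e) σ + chi (c2 e) σ) := by
        rw [Finset.mul_sum]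
        exact Finset.sum_congr rfl (fun e _ => by ring)
      rw [this]; ring
    have h2 : (∑ σ : I → Bool, (p σ - q σ)^2)
        = (1/4) * ∑ σ : I → Bool, ∑ e, ∑ f,
            (μ e * (chi (c1 e) σ + chi (c2 e) σ))
            * (μ f * (chi (c1 f) σ + chi (c2 f) σ)) := by
      rw [Finset.mul_sum]
      exact Finset.sum_congr rfl (fun σ _ => hstep σ)
    have h3 : (∑ σ : I → Bool, ∑ e, ∑ f,
            (μ e * (chi (c1 e) σ + chi (c2 e) σ))
            * (μ f * (chi (c1 f) σ + chi (c2 f) σ)))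
        = ∑ e, ∑ f, μ e * μ f *
            (∑ σ : I → Bool, (chi (c1 e) σ + chi (c2 e) σ)
              * (chi (c1 f) σ + chi (c2 f) σ)) := by
      rw [Finset.sum_comm]
      refine Finset.sum_congr rfl (fun e _ => ?_)
      rw [Finset.sum_comm]
      refine Finset.sum_congr rfl (fun f _ => ?_)
      rw [Finset.mul_sum]
      exact Finset.sum_congr rfl (fun σ _ => by ring)
    have hb : ∀ e, (∑ f, μ e * μ f *
        (∑ σ : I → Bool, (chi (c1 e) σ + chi (c2 e) σ)
          * (chi (c1 f) σ + chi (c2 f) σ)))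
        ≤ μ e * (N * (6/14)) := by
      intro e
      have hinner : ∀ f, (∑ σ : I → Bool,
          (chi (c1 e) σ + chi (c2 e) σ) * (chi (c1 f) σ + chi (c2 f) σ))
          = N * (((if c1 e = c1 f then (1:ℝ) else 0)
              + (if c1 e = c2 f then (1:ℝ) else 0))
            + ((if c2 e = c1 f then (1:ℝ) else 0)
              + (if c2 e = c2 f then (1:ℝ) else 0))) := by
        intro f
        have expand : ∀ σ : I → Bool,
            (chi (c1 e) σ + chi (c2 e) σ) * (chi (c1 f) σ + chi (c2 f) σ)
            = chi (c1 e) σ * chi (c1 f) σ + chi (c1 e) σ * chi (c2 f) σ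
              + (chi (c2 e) σ * chi (c1 f) σ + chi (c2 e) σ * chi (c2 f) σ) := by
          intro σ; ring
        rw [Fintype.sum_congr _ _ expand]
        rw [Finset.sum_add_distrib, Finset.sum_add_distrib, Finset.sum_add_distrib]
        rw [hkey, hkey, hkey, hkey]
        have hIte : ∀ (P : Prop) [Decidable P],
            (if P then N else 0) = N * (if P then (1:ℝ) else 0) := by
          intro P _; split <;> simp
        rw [hIte, hIte, hIte, hIte]; ring
      have hfactor : ∀ f, μ e * μ f *
          (∑ σ : I → Bool, (chi (c1 e) σ + chi (c2 e) σ)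
            * (chi (c1 f) σ + chi (c2 f) σ))
          = μ e * (N * (μ f * ((if c1 e = c1 f then (1:ℝ) else 0)
              + (if c1 e = c2 f then (1:ℝ) else 0)))
            + N * (μ f * ((if c2 e = c1 f then (1:ℝ) else 0)
              + (if c2 e = c2 f then (1:ℝ) else 0)))) := by
        intro f; rw [hinner f]; ring
      rw [Finset.sum_congr rfl (fun f _ => hfactor f), ← Finset.mul_sum]
      refine mul_le_mul_of_nonneg_left ?_ (hμ0 e)
      rw [Finset.sum_add_distrib, ← Finset.mul_sum, ← Finset.mul_sum]
      calc N * (∑ f, μ f * ((if c1 e = c1 f then (1:ℝ) else 0)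
              + (if c1 e = c2 f then (1:ℝ) else 0)))
            + N * (∑ f, μ f * ((if c2 e = c1 f then (1:ℝ) else 0)
              + (if c2 e = c2 f then (1:ℝ) else 0)))
          ≤ N * (3/14) + N * (3/14) :=
            add_le_add (mul_le_mul_of_nonneg_left (hrow (c1 e)) hN0.le)
              (mul_le_mul_of_nonneg_left (hrow (c2 e)) hN0.le)
        _ = N * (6/14) := by ring
    have h4 : (∑ e, ∑ f, μ e * μ f *
        (∑ σ : I → Bool, (chi (c1 e) σ + chi (c2 e) σ)
          * (chi (c1 f) σ + chi (c2 f) σ)))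
        ≤ ∑ e, μ e * (N * (6/14)) :=
      Finset.sum_le_sum (fun e _ => hb e)
    have h5 : (∑ e, μ e * (N * (6/14))) = N * (6/14) := by
      rw [← Finset.sum_mul, hμ1, one_mul]
    rw [h2, h3]
    rw [h5] at h4
    linarith
  -- pointwise consequence of no-split hypothesis
  have habs : ∀ σ : I → Bool, p σ + q σ ≤ 2/14 + |p σ - q σ| := by
    intro σ
    rcases le_or_gt (p σ) (1/14) with h | h
    · have h1 := le_abs_self (q σ - p σ)
      have h2 : |q σ - p σ| = |p σ - q σ| := abs_sub_comm _ _
      linarith [h2 ▸ h1]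
    · have hq14 := hsplit σ h
      have := le_abs_self (p σ - q σ)
      linarith
  -- summing up
  have hconst : (∑ σ : I → Bool, ((2:ℝ)/14 + |p σ - q σ|))
      = 2/14 * N + ∑ σ : I → Bool, |p σ - q σ| := by
    rw [Finset.sum_add_distrib, Finset.sum_const, Finset.card_univ,
      nsmul_eq_mul, hNdef]
    ring
  have hsum1 : N / 2 ≤ 2/14 * N + ∑ σ : I → Bool, |p σ - q σ| := by
    calc N / 2 = ∑ σ : I → Bool, (p σ + q σ) := hES.symm
      _ ≤ ∑ σ : I → Bool, ((2:ℝ)/14 + |p σ - q σ|) :=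
          Finset.sum_le_sum (fun σ _ => habs σ)
      _ = 2/14 * N + ∑ σ : I → Bool, |p σ - q σ| := hconst
  have hS0 : 0 ≤ ∑ σ : I → Bool, |p σ - q σ| :=
    Finset.sum_nonneg (fun σ _ => abs_nonneg _)
  have hCS : (∑ σ : I → Bool, |p σ - q σ|)^2
      ≤ N * ∑ σ : I → Bool, (p σ - q σ)^2 := by
    have h := Finset.sum_mul_sq_le_sq_mul_sq Finset.univ
      (fun _ : I → Bool => (1:ℝ)) (fun σ => |p σ - q σ|)
    simp only [one_mul, one_pow, sq_abs] at h
    rw [Finset.sum_const, Finset.card_univ, nsmul_eq_mul, mul_one] at h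
    calc (∑ σ : I → Bool, |p σ - q σ|)^2
        ≤ ((Fintype.card (I → Bool) : ℝ)) * ∑ σ : I → Bool, (p σ - q σ)^2 := h
      _ = N * ∑ σ : I → Bool, (p σ - q σ)^2 := by rw [hNdef]
  -- final contradiction
  have e0 : 5/14 * N ≤ ∑ σ : I → Bool, |p σ - q σ| := by linarith
  have e1 : (5/14 * N)^2 ≤ (∑ σ : I → Bool, |p σ - q σ|)^2 :=
    pow_le_pow_left₀ (by positivity) e0 2
  have e2 : N * (∑ σ : I → Bool, (p σ - q σ)^2) ≤ N * (3/28 * N) :=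
    mul_le_mul_of_nonneg_left hDsq hN0.le
  nlinarith [e1, hCS, e2, mul_pos hN0 hN0]

/-- Lemma 3.3: with `δ₁ = 1/14`, for every line graph `G` of a multigraph and every
probability measure `μ` on its vertices (the edges of the multigraph), there is a
clique of measure `≥ 3δ₁` or an anti-adjacent pair each of measure `> δ₁`. -/
theorem stmt_4 {W E : Type*} [Fintype E] [DecidableEq E] (ends : E → Sym2 W)
    (μ : E → ℝ) (hμ0 : ∀ e, 0 ≤ μ e) (hμ1 : ∑ e, μ e = 1) :
    (∃ K : Finset E, (multigraphLineGraph ends).IsClique (K : Set E) ∧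
      3 * (1 / 14 : ℝ) ≤ ∑ e ∈ K, μ e) ∨
    (∃ P Q : Finset E, Disjoint P Q ∧
      (∀ p ∈ P, ∀ q ∈ Q, ¬ (multigraphLineGraph ends).Adj p q) ∧
      (1 / 14 : ℝ) < ∑ e ∈ P, μ e ∧ (1 / 14 : ℝ) < ∑ e ∈ Q, μ e) := by
  classical
  by_contra hcon
  push_neg at hcon
  obtain ⟨h1, h2⟩ := hcon
  -- choose representatives of the endpoints of each edge
  have hrep : ∀ z : Sym2 W, ∃ x y, z = s(x, y) := by
    intro z
    induction z using Sym2.ind with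
    | _ x y => exact ⟨x, y, rfl⟩
  choose f1 f2 hf using fun e => hrep (ends e)
  have hmem : ∀ e w, w ∈ ends e ↔ (w = f1 e ∨ w = f2 e) := by
    intro e w; rw [hf e, Sym2.mem_iff]
  -- the finite set of relevant vertices
  set V0 : Finset W := (Finset.univ.image f1) ∪ (Finset.univ.image f2) with hV0
  have hV1 : ∀ e, f1 e ∈ V0 := fun e => by
    rw [hV0]
    exact Finset.mem_union_left _ (Finset.mem_image_of_mem f1 (Finset.mem_univ e))
  have hV2 : ∀ e, f2 e ∈ V0 := fun e => by
    rw [hV0]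
    exact Finset.mem_union_right _ (Finset.mem_image_of_mem f2 (Finset.mem_univ e))
  have hVm : ∀ e w, w ∈ ends e → w ∈ V0 := by
    intro e w hw
    rcases (hmem e w).mp hw with rfl | rfl
    · exact hV1 e
    · exact hV2 e
  -- the coordinates
  set c1 : E → ({x // x ∈ V0} ⊕ E) := fun e => Sum.inl ⟨f1 e, hV1 e⟩ with hc1
  set c2 : E → ({x // x ∈ V0} ⊕ E) := fun e =>
    if f1 e = f2 e then Sum.inr e else Sum.inl ⟨f2 e, hV2 e⟩ with hc2
  have hc1a : ∀ e, c1 e = Sum.inl ⟨f1 e, hV1 e⟩ := by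
    intro e; simp only [hc1]
  have hc2a : ∀ e, f1 e = f2 e → c2 e = Sum.inr e := by
    intro e h; simp only [hc2]; rw [if_pos h]
  have hc2b : ∀ e, ¬ (f1 e = f2 e) → c2 e = Sum.inl ⟨f2 e, hV2 e⟩ := by
    intro e h; simp only [hc2]; rw [if_neg h]
  have hcne : ∀ e, c1 e ≠ c2 e := by
    intro e
    by_cases h : f1 e = f2 e
    · rw [hc1a, hc2a e h]; simp
    · rw [hc1a, hc2b e h]
      simp only [ne_eq, Sum.inl.injEq, Subtype.mk.injEq]
      exact h
  -- coverage: any endpoint of an edge is one of the coordinates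
  have hcov : ∀ (g : E) (w : W) (hw : w ∈ ends g) (hwV : w ∈ V0),
      (Sum.inl ⟨w, hwV⟩ : {x // x ∈ V0} ⊕ E) = c1 g ∨
      (Sum.inl ⟨w, hwV⟩ : {x // x ∈ V0} ⊕ E) = c2 g := by
    intro g w hw hwV
    rcases (hmem g w).mp hw with h | h
    · left; rw [hc1a]; simp [h]
    · by_cases hd : f1 g = f2 g
      · left; rw [hc1a]; simp [h, hd]
      · right; rw [hc2b g hd]; simp [h]
  -- star bound
  have hstar : ∀ x : {x // x ∈ V0} ⊕ E,
      ∑ f ∈ Finset.univ.filter (fun f => x = c1 f ∨ x = c2 f), μ f ≤ 3 / 14 := by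
    intro x
    have hclique : (multigraphLineGraph ends).IsClique
        ((Finset.univ.filter (fun f => x = c1 f ∨ x = c2 f) : Finset E) : Set E) := by
      intro a ha b hb hab
      simp only [Finset.coe_filter, Set.mem_setOf_eq, Finset.mem_univ, true_and] at ha hb
      rw [multigraphLineGraph, SimpleGraph.fromRel_adj]
      refine ⟨hab, Or.inl ?_⟩
      rcases x with xv | xe
      · -- a vertex coordinate
        have hxa : (xv : W) ∈ ends a := by
          rcases ha with h | h
          · rw [hc1a] at h
            rw [hmem]; left
            exact congrArg Subtype.val (Sum.inl.inj h)
          · by_cases hd : f1 a = f2 a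
            · rw [hc2a a hd] at h; exact absurd h (by simp)
            · rw [hc2b a hd] at h
              rw [hmem]; right
              exact congrArg Subtype.val (Sum.inl.inj h)
        have hxb : (xv : W) ∈ ends b := by
          rcases hb with h | h
          · rw [hc1a] at h
            rw [hmem]; left
            exact congrArg Subtype.val (Sum.inl.inj h)
          · by_cases hd : f1 b = f2 b
            · rw [hc2a b hd] at h; exact absurd h (by simp)
            · rw [hc2b b hd] at h
              rw [hmem]; right
              exact congrArg Subtype.val (Sum.inl.inj h)
        exact ⟨xv, hxa, hxb⟩
      · -- an edge coordinate: forces a = b, impossible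
        exfalso
        have hea : a = xe := by
          rcases ha with h | h
          · rw [hc1a] at h; exact absurd h (by simp)
          · by_cases hd : f1 a = f2 a
            · rw [hc2a a hd] at h; exact (Sum.inr.inj h).symm
            · rw [hc2b a hd] at h; exact absurd h (by simp)
        have heb : b = xe := by
          rcases hb with h | h
          · rw [hc1a] at h; exact absurd h (by simp)
          · by_cases hd : f1 b = f2 b
            · rw [hc2a b hd] at h; exact (Sum.inr.inj h).symm
            · rw [hc2b b hd] at h; exact absurd h (by simp)
        exact hab (hea.trans heb.symm)
    have := h1 _ hclique
    linarith
  -- split bound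
  have hsplit : ∀ σ : ({x // x ∈ V0} ⊕ E) → Bool,
      1 / 14 < ∑ e ∈ Finset.univ.filter
          (fun e => σ (c1 e) = true ∧ σ (c2 e) = true), μ e →
      ∑ e ∈ Finset.univ.filter
          (fun e => σ (c1 e) = false ∧ σ (c2 e) = false), μ e ≤ 1 / 14 := by
    intro σ hP
    set P : Finset E := Finset.univ.filter
      (fun e => σ (c1 e) = true ∧ σ (c2 e) = true) with hPdef
    set Q : Finset E := Finset.univ.filter
      (fun e => σ (c1 e) = false ∧ σ (c2 e) = false) with hQdef
    have hdisj : Disjoint P Q := by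
      rw [Finset.disjoint_left]
      intro e heP heQ
      rw [hPdef, Finset.mem_filter] at heP
      rw [hQdef, Finset.mem_filter] at heQ
      rw [heP.2.1] at heQ
      exact absurd heQ.2.1 (by simp)
    have hanti : ∀ p ∈ P, ∀ q ∈ Q, ¬ (multigraphLineGraph ends).Adj p q := by
      intro a ha b hb hadj
      rw [hPdef, Finset.mem_filter] at ha
      rw [hQdef, Finset.mem_filter] at hb
      rw [multigraphLineGraph, SimpleGraph.fromRel_adj] at hadj
      obtain ⟨hne, hor⟩ := hadj
      have hw : ∃ w : W, w ∈ ends a ∧ w ∈ ends b := by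
        rcases hor with h | h
        · exact h
        · obtain ⟨w, h1', h2'⟩ := h; exact ⟨w, h2', h1'⟩
      obtain ⟨w, hwa, hwb⟩ := hw
      have hwV : w ∈ V0 := hVm a w hwa
      have htrue : σ (Sum.inl ⟨w, hwV⟩ : {x // x ∈ V0} ⊕ E) = true := by
        rcases hcov a w hwa hwV with h | h
        · rw [h]; exact ha.2.1
        · rw [h]; exact ha.2.2
      have hfalse : σ (Sum.inl ⟨w, hwV⟩ : {x // x ∈ V0} ⊕ E) = false := by
        rcases hcov b w hwb hwV with h | h
        · rw [h]; exact hb.2.1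
        · rw [h]; exact hb.2.2
      rw [htrue] at hfalse
      exact absurd hfalse (by simp)
    exact h2 P Q hdisj hanti hP
  exact aux_main μ hμ0 hμ1 c1 c2 hcne hstar hsplit
end

section
/- Let (G,(A,B,S)) be a structured pair satisfying properties (NE1) and (NE2). Then for every two distinct vertices x, y ∈ S with xy ∉ E(G), we have N_A(x) = N_A(y) if and only if N_B(x) = N_B(y). -/
/-- `nbhdIn G A x` is `N(x) ∩ A`, the neighbourhood of `x` inside `A`. -/
def nbhdIn {V : Type*} [DecidableEq V] (G : SimpleGraph V) [DecidableRel G.Adj]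
    (A : Finset V) (x : V) : Finset V :=
  A.filter (fun a => G.Adj x a)

/-- `(G,(A,B,S))` is a structured pair: `A ⊎ B ⊎ S` is a partition of `V(G)` into
nonempty parts, `G[A]` and `G[B]` are connected, and `N(A) = N(B) = S` (every
vertex of `S` has a neighbour in `A` and in `B`, and there are no edges between
`A` and `B`). -/
def IsStructuredPair {V : Type*} [Fintype V] [DecidableEq V] (G : SimpleGraph V)
    [DecidableRel G.Adj] (A B S : Finset V) : Prop :=
  A.Nonempty ∧ B.Nonempty ∧ S.Nonempty ∧
  Disjoint A B ∧ Disjoint A S ∧ Disjoint B S ∧ A ∪ B ∪ S = Finset.univ ∧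
  (G.induce (A : Set V)).Connected ∧ (G.induce (B : Set V)).Connected ∧
  (∀ s ∈ S, ∃ a ∈ A, G.Adj s a) ∧ (∀ s ∈ S, ∃ b ∈ B, G.Adj s b) ∧
  (∀ a ∈ A, ∀ b ∈ B, ¬ G.Adj a b)

/-- Property (NE1): no vertex of `S` is adjacent to all of `A` or to all of `B`. -/
def PropNE1 {V : Type*} [DecidableEq V] (G : SimpleGraph V) [DecidableRel G.Adj]
    (A B S : Finset V) : Prop :=
  ∀ x ∈ S, ¬ A ⊆ nbhdIn G A x ∧ ¬ B ⊆ nbhdIn G B x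

/-- Property (NE2), one orientation: for distinct nonadjacent `x, y ∈ S`, if
`N_B(x) ≠ N_B(y)` then there is no edge between `N_A(x) ∩ N_A(y)` and
`A \ (N_A(x) ∪ N_A(y))`. -/
def PropNE2 {V : Type*} [DecidableEq V] (G : SimpleGraph V) [DecidableRel G.Adj]
    (A B S : Finset V) : Prop :=
  ∀ x ∈ S, ∀ y ∈ S, x ≠ y → ¬ G.Adj x y → nbhdIn G B x ≠ nbhdIn G B y →
    ∀ p ∈ nbhdIn G A x ∩ nbhdIn G A y, ∀ q ∈ A \ (nbhdIn G A x ∪ nbhdIn G A y),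
      ¬ G.Adj p q

/-- Property (NE3): for distinct nonadjacent `x, y ∈ S` with `N_A(x) ⊊ N_A(y)`,
the sets `N_A(x)` and `N_A(y) \ N_A(x)` are fully adjacent. -/
def PropNE3 {V : Type*} [DecidableEq V] (G : SimpleGraph V) [DecidableRel G.Adj]
    (A S : Finset V) : Prop :=
  ∀ x ∈ S, ∀ y ∈ S, x ≠ y → ¬ G.Adj x y → nbhdIn G A x ⊂ nbhdIn G A y →
    ∀ p ∈ nbhdIn G A x, ∀ q ∈ nbhdIn G A y \ nbhdIn G A x, G.Adj p q

/-- Property (E1): along every edge `xy` of `G[S]`, `N_A(x) \ N_A(y) = ∅` or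
`N_B(x) \ N_B(y) = ∅`. -/
def PropE1 {V : Type*} [DecidableEq V] (G : SimpleGraph V) [DecidableRel G.Adj]
    (A B S : Finset V) : Prop :=
  ∀ x ∈ S, ∀ y ∈ S, G.Adj x y →
    nbhdIn G A x \ nbhdIn G A y = ∅ ∨ nbhdIn G B x \ nbhdIn G B y = ∅

/-- A nice structured pair: a structured pair satisfying (NE1), (NE2) (in both
orientations), (NE3), and (E1). -/
def IsNiceStructuredPair {V : Type*} [Fintype V] [DecidableEq V] (G : SimpleGraph V)
    [DecidableRel G.Adj] (A B S : Finset V) : Prop :=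
  IsStructuredPair G A B S ∧ PropNE1 G A B S ∧ PropNE2 G A B S ∧ PropNE2 G B A S ∧
  PropNE3 G A S ∧ PropE1 G A B S

lemma walk_cross {V : Type*} [DecidableEq V] (G : SimpleGraph V) (s : Set V)
    (P : Finset V) : ∀ {a b : ↥s}, (G.induce s).Walk a b → (a : V) ∈ P →
    (b : V) ∉ P → ∃ p q : ↥s, (p : V) ∈ P ∧ (q : V) ∉ P ∧ G.Adj (p : V) (q : V) := by
  intro a b w
  induction w with
  | nil => intro h1 h2; exact absurd h1 h2
  | @cons u v w h _ ih =>
    intro h1 h2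
    by_cases hc : (v : V) ∈ P
    · exact ih hc h2
    · exact ⟨u, v, h1, hc, h⟩

lemma crossing {V : Type*} [DecidableEq V] (G : SimpleGraph V) (A : Finset V)
    (hconn : (G.induce (A : Set V)).Connected) (P : Finset V)
    (hP : ∃ p ∈ A, p ∈ P) (hQ : ∃ q ∈ A, q ∉ P) :
    ∃ p ∈ A, p ∈ P ∧ ∃ q ∈ A, q ∉ P ∧ G.Adj p q := by
  obtain ⟨p, hpA, hpP⟩ := hP
  obtain ⟨q, hqA, hqP⟩ := hQ
  obtain ⟨w⟩ := hconn.preconnected ⟨p, by simpa using hpA⟩ ⟨q, by simpa using hqA⟩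
  obtain ⟨u, v, hu, hv, huv⟩ := walk_cross G (A : Set V) P w hpP hqP
  exact ⟨u, by simpa using u.2, hu, v, by simpa using v.2, hv, huv⟩

lemma aux_dir {V : Type*} [DecidableEq V] (G : SimpleGraph V) [DecidableRel G.Adj]
    (A B S : Finset V)
    (hconn : (G.induce (A : Set V)).Connected)
    (hnb : ∀ s ∈ S, ∃ a ∈ A, G.Adj s a)
    (hne1 : ∀ x ∈ S, ¬ A ⊆ nbhdIn G A x)
    (hne2 : PropNE2 G A B S)
    {x y : V} (hx : x ∈ S) (hy : y ∈ S) (hxy : x ≠ y) (hadj : ¬ G.Adj x y)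
    (hA : nbhdIn G A x = nbhdIn G A y) : nbhdIn G B x = nbhdIn G B y := by
  by_contra hB
  have hno := hne2 x hx y hy hxy hadj hB
  obtain ⟨a, haA, haAdj⟩ := hnb x hx
  have hPne : ∃ p ∈ A, p ∈ nbhdIn G A x :=
    ⟨a, haA, Finset.mem_filter.2 ⟨haA, haAdj⟩⟩
  have hQne : ∃ q ∈ A, q ∉ nbhdIn G A x := by
    by_contra h
    push_neg at h
    exact hne1 x hx (fun q hq => h q hq)
  obtain ⟨p, hpA, hpP, q, hqA, hqP, hpq⟩ := crossing G A hconn _ hPne hQne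
  refine hno p ?_ q ?_ hpq
  · exact Finset.mem_inter.2 ⟨hpP, hA ▸ hpP⟩
  · refine Finset.mem_sdiff.2 ⟨hqA, ?_⟩
    rw [← hA, Finset.union_self]
    exact hqP

/-- Lemma 4.7: in a structured pair satisfying (NE1) and (NE2) (both
orientations), for distinct nonadjacent `x, y ∈ S`, `N_A(x) = N_A(y)` iff
`N_B(x) = N_B(y)`. -/
theorem stmt_10 {V : Type*} [Fintype V] [DecidableEq V] (G : SimpleGraph V)
    [DecidableRel G.Adj] (A B S : Finset V)
    (hstr : IsStructuredPair G A B S)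
    (hne1 : PropNE1 G A B S)
    (hne2 : PropNE2 G A B S) (hne2' : PropNE2 G B A S) :
    ∀ x ∈ S, ∀ y ∈ S, x ≠ y → ¬ G.Adj x y →
      (nbhdIn G A x = nbhdIn G A y ↔ nbhdIn G B x = nbhdIn G B y) := by
  obtain ⟨_, _, _, _, _, _, _, hcA, hcB, hnbA, hnbB, _⟩ := hstr
  intro x hx y hy hxy hadj
  constructor
  · exact aux_dir G A B S hcA hnbA (fun s hs => (hne1 s hs).1) hne2 hx hy hxy hadj
  · exact aux_dir G B A S hcB hnbB (fun s hs => (hne1 s hs).2) hne2' hx hy hxy hadj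
end

section
/- Let (G,(A,B,S)) be a nice structured pair. Then there do not exist three distinct vertices x, y, z ∈ S with xy ∉ E(G), yz ∉ E(G), and N_A(x) ⊊ N_A(y) ⊊ N_A(z). -/
lemma cross_edge {V : Type*} [DecidableEq V] (G : SimpleGraph V)
    (B T : Finset V) (hconn : (G.induce (B : Set V)).Connected)
    (hTB : T ⊆ B) (hT : T.Nonempty) (hBT : (B \ T).Nonempty) :
    ∃ p ∈ T, ∃ q ∈ B \ T, G.Adj p q := by
  by_contra h
  push_neg at h
  obtain ⟨b, hb⟩ := hT
  obtain ⟨b', hb'⟩ := hBT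
  have hbB : b ∈ B := hTB hb
  have hb'B : b' ∈ B := (Finset.mem_sdiff.mp hb').1
  have hreach := hconn.preconnected ⟨b, by simpa using hbB⟩ ⟨b', by simpa using hb'B⟩
  obtain ⟨w⟩ := hreach
  have key : ∀ (u v : (B : Set V)), (G.induce (B : Set V)).Walk u v → u.val ∈ T → v.val ∈ T := by
    intro u v w
    induction w with
    | nil => exact id
    | @cons u1 u2 u3 hadj _ ih =>
      intro hu
      apply ih
      have hadj' : G.Adj u1.val u2.val := hadj
      by_contra hc
      exact h u1.val hu u2.val (Finset.mem_sdiff.mpr ⟨by simpa using u2.property, hc⟩) hadj'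
  have := key _ _ w hb
  exact (Finset.mem_sdiff.mp hb').2 this

/-- Lemma 4.8 -/
theorem stmt_11 {V : Type*} [Fintype V] [DecidableEq V] (G : SimpleGraph V)
    [DecidableRel G.Adj] (A B S : Finset V)
    (hnice : IsNiceStructuredPair G A B S) :
    ¬ ∃ x ∈ S, ∃ y ∈ S, ∃ z ∈ S, x ≠ y ∧ y ≠ z ∧ x ≠ z ∧
      ¬ G.Adj x y ∧ ¬ G.Adj y z ∧
      nbhdIn G A x ⊂ nbhdIn G A y ∧ nbhdIn G A y ⊂ nbhdIn G A z := by
  rintro ⟨x, hx, y, hy, z, hz, hxy, hyz, hxz, hnxy, hnyz, h1, h2⟩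
  obtain ⟨hsp, hne1, hne2, hne2', hne3, _⟩ := hnice
  obtain ⟨hA, hB, hS, _, _, _, _, hAconn, hBconn, hSA, hSB, _⟩ := hsp
  -- Step 1: N_B(x) ≠ N_B(y)
  have hAne : nbhdIn G A x ≠ nbhdIn G A y := h1.ne
  have hBne : nbhdIn G B x ≠ nbhdIn G B y := by
    intro hEq
    have hforb := hne2' x hx y hy hxy hnxy hAne
    -- N_B(x) nonempty
    obtain ⟨b, hbB, hbadj⟩ := hSB x hx
    have hbT : b ∈ nbhdIn G B x := Finset.mem_filter.mpr ⟨hbB, hbadj⟩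
    have hTB : nbhdIn G B x ⊆ B := Finset.filter_subset _ _
    have hBT : (B \ nbhdIn G B x).Nonempty := by
      have := (hne1 x hx).2
      rw [Finset.not_subset] at this
      obtain ⟨b', hb'B, hb'⟩ := this
      exact ⟨b', Finset.mem_sdiff.mpr ⟨hb'B, hb'⟩⟩
    obtain ⟨p, hp, q, hq, hpq⟩ := cross_edge G B (nbhdIn G B x) hBconn hTB ⟨b, hbT⟩ hBT
    refine hforb p ?_ q ?_ hpq
    · rw [Finset.mem_inter]; exact ⟨hp, hEq ▸ hp⟩
    · rw [← hEq, Finset.union_self]; exact hq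
  -- Step 2
  have hforbA := hne2 x hx y hy hxy hnxy hBne
  obtain ⟨a, haA, haadj⟩ := hSA x hx
  have haNx : a ∈ nbhdIn G A x := Finset.mem_filter.mpr ⟨haA, haadj⟩
  obtain ⟨c, hcz, hcy⟩ := Finset.exists_of_ssubset h2
  have hcA : c ∈ A := (Finset.mem_filter.mp hcz).1
  have hcx : c ∉ nbhdIn G A x := fun hc => hcy (h1.subset hc)
  have hadjac : G.Adj a c :=
    hne3 y hy z hz hyz hnyz h2 a (h1.subset haNx) c (Finset.mem_sdiff.mpr ⟨hcz, hcy⟩)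
  refine hforbA a ?_ c ?_ hadjac
  · exact Finset.mem_inter.mpr ⟨haNx, h1.subset haNx⟩
  · refine Finset.mem_sdiff.mpr ⟨hcA, ?_⟩
    rw [Finset.mem_union]
    rintro (h | h) <;> [exact hcx h; exact hcy h]
end

section
/- Let (G,(A,B,S)) be a nice structured pair and let Ŝ ⊆ S satisfy: for all distinct nonadjacent x,y ∈ Ŝ, either (N_A(x)=N_A(y) and N_B(x)=N_B(y)) or (N_A(x), N_A(y) incomparable and N_B(x), N_B(y) incomparable). Then for all distinct x, y ∈ Ŝ with (N_A(x), N_B(x)) ≠ (N_A(y), N_B(y)): xy ∈ E(G) if and only if exactly one of the following holds: (i) N_A(x)=N_A(y) and N_B(x)≠N_B(y); (ii) N_B(x)=N_B(y) and N_A(x)≠N_A(y); (iii) N_A(x) ⊊ N_A(y) and N_B(x) ⊋ N_B(y); (iv) N_A(x) ⊋ N_A(y) and N_B(x) ⊊ N_B(y). Moreover xy ∉ E(G) if and only if N_A(x), N_A(y) are incomparable and N_B(x), N_B(y) are incomparable. -/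
/-- Theorem 4.10: in a nice structured pair, given `Ŝ ⊆ S` on which nonadjacency
means equal or doubly-incomparable neighbourhoods, for distinct `x, y ∈ Ŝ` whose
pairs of neighbourhoods `(N_A, N_B)` differ: `xy ∈ E(G)` iff one of the relations
`R⁼_A`, `R⁼_B`, `R⊊`, `R⊋` holds, and `xy ∉ E(G)` iff both the `A`- and the
`B`-neighbourhoods are incomparable. -/
theorem stmt_13 {V : Type*} [Fintype V] [DecidableEq V] (G : SimpleGraph V)
    [DecidableRel G.Adj] (A B S : Finset V)
    (hnice : IsNiceStructuredPair G A B S)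
    (Shat : Finset V) (hShat : Shat ⊆ S)
    (hprop : ∀ x ∈ Shat, ∀ y ∈ Shat, x ≠ y → ¬ G.Adj x y →
        (nbhdIn G A x = nbhdIn G A y ∧ nbhdIn G B x = nbhdIn G B y) ∨
        ((¬ nbhdIn G A x ⊆ nbhdIn G A y ∧ ¬ nbhdIn G A y ⊆ nbhdIn G A x) ∧
         (¬ nbhdIn G B x ⊆ nbhdIn G B y ∧ ¬ nbhdIn G B y ⊆ nbhdIn G B x))) :
    ∀ x ∈ Shat, ∀ y ∈ Shat, x ≠ y →
      (nbhdIn G A x, nbhdIn G B x) ≠ (nbhdIn G A y, nbhdIn G B y) →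
      (G.Adj x y ↔
        ((nbhdIn G A x = nbhdIn G A y ∧ nbhdIn G B x ≠ nbhdIn G B y) ∨
         (nbhdIn G B x = nbhdIn G B y ∧ nbhdIn G A x ≠ nbhdIn G A y) ∨
         (nbhdIn G A x ⊂ nbhdIn G A y ∧ nbhdIn G B y ⊂ nbhdIn G B x) ∨
         (nbhdIn G A y ⊂ nbhdIn G A x ∧ nbhdIn G B x ⊂ nbhdIn G B y))) ∧
      (¬ G.Adj x y ↔
        ((¬ nbhdIn G A x ⊆ nbhdIn G A y ∧ ¬ nbhdIn G A y ⊆ nbhdIn G A x) ∧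
         (¬ nbhdIn G B x ⊆ nbhdIn G B y ∧ ¬ nbhdIn G B y ⊆ nbhdIn G B x))) := by
  intro x hx y hy hxy hne
  have hxS := hShat hx
  have hyS := hShat hy
  have hE1 := hnice.2.2.2.2.2
  have hnadj : ¬ G.Adj x y ↔
      ((¬ nbhdIn G A x ⊆ nbhdIn G A y ∧ ¬ nbhdIn G A y ⊆ nbhdIn G A x) ∧
       (¬ nbhdIn G B x ⊆ nbhdIn G B y ∧ ¬ nbhdIn G B y ⊆ nbhdIn G B x)) := by
    constructor
    · intro h
      rcases hprop x hx y hy hxy h with ⟨hA, hB⟩ | h'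
      · exact absurd (by rw [hA, hB]) hne
      · exact h'
    · rintro ⟨⟨hAxy, _⟩, ⟨hBxy, _⟩⟩ hadj
      rcases hE1 x hxS y hyS hadj with h | h
      · exact hAxy (Finset.sdiff_eq_empty_iff_subset.mp h)
      · exact hBxy (Finset.sdiff_eq_empty_iff_subset.mp h)
  refine ⟨?_, hnadj⟩
  constructor
  · intro hadj
    have h1 := hE1 x hxS y hyS hadj
    have h2 := hE1 y hyS x hxS hadj.symm
    rw [Finset.sdiff_eq_empty_iff_subset, Finset.sdiff_eq_empty_iff_subset] at h1 h2
    have hne' : nbhdIn G A x ≠ nbhdIn G A y ∨ nbhdIn G B x ≠ nbhdIn G B y := by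
      by_contra hc
      push_neg at hc
      exact hne (by rw [hc.1, hc.2])
    rcases h1 with h1 | h1 <;> rcases h2 with h2 | h2
    · left
      refine ⟨Finset.Subset.antisymm h1 h2, ?_⟩
      rcases hne' with h | h
      · exact absurd (Finset.Subset.antisymm h1 h2) h
      · exact h
    · by_cases hA : nbhdIn G A x = nbhdIn G A y
      · left
        refine ⟨hA, ?_⟩
        rcases hne' with h | h
        · exact absurd hA h
        · exact h
      · by_cases hB : nbhdIn G B x = nbhdIn G B y
        · exact Or.inr (Or.inl ⟨hB, hA⟩)
        · exact Or.inr (Or.inr (Or.inl ⟨⟨h1, fun hs => hA (Finset.Subset.antisymm h1 hs)⟩,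
            ⟨h2, fun hs => hB (Finset.Subset.antisymm hs h2)⟩⟩))
    · by_cases hA : nbhdIn G A x = nbhdIn G A y
      · left
        refine ⟨hA, ?_⟩
        rcases hne' with h | h
        · exact absurd hA h
        · exact h
      · by_cases hB : nbhdIn G B x = nbhdIn G B y
        · exact Or.inr (Or.inl ⟨hB, hA⟩)
        · exact Or.inr (Or.inr (Or.inr ⟨⟨h2, fun hs => hA (Finset.Subset.antisymm hs h2)⟩,
            ⟨h1, fun hs => hB (Finset.Subset.antisymm h1 hs)⟩⟩))
    · right; left
      refine ⟨Finset.Subset.antisymm h1 h2, ?_⟩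
      rcases hne' with h | h
      · exact h
      · exact absurd (Finset.Subset.antisymm h1 h2) h
  · intro hd
    by_contra hnadj'
    obtain ⟨⟨hAxy, hAyx⟩, ⟨hBxy, hByx⟩⟩ := hnadj.mp hnadj'
    rcases hd with ⟨hA, _⟩ | ⟨hB, _⟩ | ⟨hA, _⟩ | ⟨hA, _⟩
    · exact hAxy (hA ▸ Finset.Subset.refl _)
    · exact hBxy (hB ▸ Finset.Subset.refl _)
    · exact hAxy hA.subset
    · exact hAyx hA.subset
end

section
/- Let Ŝ be as above (the adjacency of vertices of Ŝ is determined by the pairs (N_A(x), N_B(x)) according to the classification), and let x, y, z ∈ Ŝ be three distinct vertices belonging to different R=-classes with xy ∈ E(G), yz ∈ E(G), and xz ∉ E(G). Then one of the following holds: (i) N_A(x)=N_A(y), N_B(x)≠N_B(y), N_B(y)=N_B(z), N_A(y)≠N_A(z); (ii) N_B(x)=N_B(y), N_A(x)≠N_A(y), N_A(y)=N_A(z), N_B(y)≠N_B(z); (iii) N_A(x) ⊊ N_A(y), N_B(x) ⊋ N_B(y), N_A(z) ⊊ N_A(y), N_B(z) ⊋ N_B(y); (iv) N_A(x) ⊋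 N_A(y), N_B(x) ⊊ N_B(y), N_A(z) ⊋ N_A(y), N_B(z) ⊊ N_B(y). -/
/-- Lemma 4.12: with adjacency inside `Ŝ` determined by the maps `N_A`, `N_B`
via the five-relation classification, for any induced path `x - y - z` in `Ŝ`
with `x, y, z` in pairwise distinct `R⁼`-classes, one of the four listed
combinations of relations holds. -/
theorem stmt_15 {V α : Type*} (G : SimpleGraph V) (Shat : Set V)
    (NA NB : V → Set α)
    (hclass : ∀ x ∈ Shat, ∀ y ∈ Shat, x ≠ y →
      (G.Adj x y ↔
        ((NA x = NA y ∧ NB x ≠ NB y) ∨ (NB x = NB y ∧ NA x ≠ NA y) ∨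
         (NA x ⊂ NA y ∧ NB y ⊂ NB x) ∨ (NA y ⊂ NA x ∧ NB x ⊂ NB y))) ∧
      (¬ G.Adj x y ↔
        ((NA x = NA y ∧ NB x = NB y) ∨
         ((¬ NA x ⊆ NA y ∧ ¬ NA y ⊆ NA x) ∧ (¬ NB x ⊆ NB y ∧ ¬ NB y ⊆ NB x)))))
    (x y z : V) (hx : x ∈ Shat) (hy : y ∈ Shat) (hz : z ∈ Shat)
    (hxy : x ≠ y) (hyz : y ≠ z) (hxz : x ≠ z)
    (hcxy : ¬ (NA x = NA y ∧ NB x = NB y))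
    (hcyz : ¬ (NA y = NA z ∧ NB y = NB z))
    (hcxz : ¬ (NA x = NA z ∧ NB x = NB z))
    (haxy : G.Adj x y) (hayz : G.Adj y z) (haxz : ¬ G.Adj x z) :
    (NA x = NA y ∧ NB x ≠ NB y ∧ NB y = NB z ∧ NA y ≠ NA z) ∨
    (NB x = NB y ∧ NA x ≠ NA y ∧ NA y = NA z ∧ NB y ≠ NB z) ∨
    (NA x ⊂ NA y ∧ NB y ⊂ NB x ∧ NA z ⊂ NA y ∧ NB y ⊂ NB z) ∨
    (NA y ⊂ NA x ∧ NB x ⊂ NB y ∧ NA y ⊂ NA z ∧ NB z ⊂ NB y) := by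
  have h1 := ((hclass x hx y hy hxy).1).mp haxy
  have h2 := ((hclass y hy z hz hyz).1).mp hayz
  have h3 := ((hclass x hx z hz hxz).2).mp haxz
  obtain ⟨⟨hA1, hA2⟩, ⟨hB1, hB2⟩⟩ : (¬ NA x ⊆ NA z ∧ ¬ NA z ⊆ NA x) ∧
      (¬ NB x ⊆ NB z ∧ ¬ NB z ⊆ NB x) := by
    rcases h3 with h | h
    · exact absurd h hcxz
    · exact h
  rcases h1 with ⟨e1, n1⟩ | ⟨e1, n1⟩ | ⟨s1, t1⟩ | ⟨s1, t1⟩ <;>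
    rcases h2 with ⟨e2, n2⟩ | ⟨e2, n2⟩ | ⟨s2, t2⟩ | ⟨s2, t2⟩
  · exact absurd (le_of_eq (e1.trans e2)) hA1
  · exact Or.inl ⟨e1, n1, e2, n2⟩
  · exact absurd (e1 ▸ s2.subset) hA1
  · exact absurd (s2.subset.trans (le_of_eq e1.symm)) hA2
  · refine Or.inr (Or.inl ⟨e1, n1, e2, fun h => hB1 (le_of_eq (e1.trans h))⟩)
  · exact absurd (le_of_eq (e1.trans e2)) hB1
  · exact absurd (t2.subset.trans (le_of_eq e1.symm)) hB2
  · exact absurd (e1 ▸ t2.subset) hB1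
  · exact absurd (s1.subset.trans (le_of_eq e2)) hA1
  · exact absurd (e2 ▸ t1.subset) hB2
  · exact absurd (s1.subset.trans s2.subset) hA1
  · exact Or.inr (Or.inr (Or.inl ⟨s1, t1, s2, t2⟩))
  · exact absurd (le_of_eq e2.symm |>.trans s1.subset) hA2
  · exact absurd (t1.subset.trans (le_of_eq e2)) hB1
  · exact Or.inr (Or.inr (Or.inr ⟨s1, t1, s2, t2⟩))
  · exact absurd (s2.subset.trans s1.subset) hA2
end

section
/- Let Ŝ be as above (adjacency within Ŝ determined by the pairs (N_A(·), N_B(·)) according to the five-relation classification). Then the quotient graph of the partition of G[Ŝ] into equivalence classes of the relation R= contains no induced odd cycle of length at least 5 and no complement of such a cycle; that is, the quotient graph is Berge. More precisely: there is no sequence x₁, …, x_h of vertices of Ŝ with h ≥ 5 odd, pairwise in distinct R=-classes, such that x_i x_{i+1} ∈ E(G) and x_i x_{i+2} ∉ E(G) for all i (indices mod h). -/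
/-- Lemma 4.13 (Bergeness of the quotient graph), precise form: with adjacency
inside `Ŝ` determined by the maps `N_A`, `N_B` via the five-relation
classification, there is no sequence `x₁, …, x_h` of vertices of `Ŝ` with `h ≥ 5`
odd, lying in pairwise distinct `R⁼`-classes, such that `xᵢxᵢ₊₁ ∈ E(G)` and
`xᵢxᵢ₊₂ ∉ E(G)` for all `i` (indices mod `h`). (Such a sequence exists in every
odd hole and in every odd antihole of the quotient graph, so the quotient graph
is Berge.) -/
theorem stmt_16 {V α : Type*} (G : SimpleGraph V) (Shat : Set V)
    (NA NB : V → Set α)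
    (hclass : ∀ x ∈ Shat, ∀ y ∈ Shat, x ≠ y →
      (G.Adj x y ↔
        ((NA x = NA y ∧ NB x ≠ NB y) ∨ (NB x = NB y ∧ NA x ≠ NA y) ∨
         (NA x ⊂ NA y ∧ NB y ⊂ NB x) ∨ (NA y ⊂ NA x ∧ NB x ⊂ NB y))) ∧
      (¬ G.Adj x y ↔
        ((NA x = NA y ∧ NB x = NB y) ∨
         ((¬ NA x ⊆ NA y ∧ ¬ NA y ⊆ NA x) ∧ (¬ NB x ⊆ NB y ∧ ¬ NB y ⊆ NB x))))) :
    ¬ ∃ (h : ℕ), 5 ≤ h ∧ Odd h ∧ ∃ x : ZMod h → V,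
      (∀ i, x i ∈ Shat) ∧
      (∀ i j, i ≠ j → ¬ (NA (x i) = NA (x j) ∧ NB (x i) = NB (x j))) ∧
      (∀ i, G.Adj (x i) (x (i + 1))) ∧
      (∀ i, ¬ G.Adj (x i) (x (i + 2))) := by
  classical
  rintro ⟨h, hh5, hodd, x, hS, hdist, hadj, hnadj⟩
  haveI : NeZero h := ⟨by omega⟩
  have h1 : (1 : ZMod h) ≠ 0 := by
    have : ((1:ℕ) : ZMod h) ≠ 0 := by
      rw [Ne, ZMod.natCast_eq_zero_iff]
      intro hd; have := Nat.le_of_dvd one_pos hd; omega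
    simpa using this
  have h2 : (2 : ZMod h) ≠ 0 := by
    have : ((2:ℕ) : ZMod h) ≠ 0 := by
      rw [Ne, ZMod.natCast_eq_zero_iff]
      intro hd; have := Nat.le_of_dvd two_pos hd; omega
    simpa using this
  have hne1 : ∀ i : ZMod h, x i ≠ x (i+1) := by
    intro i e
    exact hdist i (i+1) (fun e' => h1 (left_eq_add.mp e')) ⟨by rw [e], by rw [e]⟩
  have hne2idx : ∀ i : ZMod h, i ≠ i + 2 := fun i e' => h2 (left_eq_add.mp e')
  have hinc : ∀ i : ZMod h, (¬ NA (x i) ⊆ NA (x (i+2)) ∧ ¬ NA (x (i+2)) ⊆ NA (x i)) ∧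
      (¬ NB (x i) ⊆ NB (x (i+2)) ∧ ¬ NB (x (i+2)) ⊆ NB (x i)) := by
    intro i
    have hne : x i ≠ x (i+2) := by
      intro e
      exact hdist i (i+2) (hne2idx i) ⟨by rw [e], by rw [e]⟩
    have := ((hclass _ (hS i) _ (hS (i+2)) hne).2).mp (hnadj i)
    rcases this with ⟨e1, e2⟩ | hI
    · exact absurd ⟨e1, e2⟩ (hdist i (i+2) (hne2idx i))
    · exact hI
  have hA : ∀ i : ZMod h,
      (NA (x i) = NA (x (i+1)) ∧ NB (x i) ≠ NB (x (i+1))) ∨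
      (NB (x i) = NB (x (i+1)) ∧ NA (x i) ≠ NA (x (i+1))) ∨
      (NA (x i) ⊂ NA (x (i+1)) ∧ NB (x (i+1)) ⊂ NB (x i)) ∨
      (NA (x (i+1)) ⊂ NA (x i) ∧ NB (x i) ⊂ NB (x (i+1))) :=
    fun i => ((hclass _ (hS i) _ (hS (i+1)) (hne1 i)).1).mp (hadj i)
  set P : ZMod h → Prop := fun i =>
    (NA (x i) = NA (x (i+1)) ∧ NB (x i) ≠ NB (x (i+1))) ∨
    (NA (x i) ⊂ NA (x (i+1)) ∧ NB (x (i+1)) ⊂ NB (x i)) with hP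
  have hstep : ∀ i : ZMod h, P (i+1) ↔ ¬ P i := by
    intro i
    have e12 : i + 1 + 1 = i + 2 := by ring
    have hAi := hA i
    have hAi1 := hA (i+1)
    rw [e12] at hAi1
    have hincA := (hinc i).1.1
    have hincB := (hinc i).2.1
    simp only [hP]
    rw [e12]
    constructor
    · intro hq hp
      apply hincA
      rcases hp with ⟨e, -⟩ | ⟨s, -⟩ <;> rcases hq with ⟨e', -⟩ | ⟨s', -⟩
      · rw [e, e']
      · rw [e]; exact s'.subset
      · rw [← e']; exact s.subset
      · exact (s.trans s').subset
    · intro hnp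
      by_contra hnq
      have Qi : NB (x i) = NB (x (i+1)) ∨ NB (x i) ⊂ NB (x (i+1)) := by
        rcases hAi with c|c|c|c
        · exact absurd (Or.inl c) hnp
        · exact Or.inl c.1
        · exact absurd (Or.inr c) hnp
        · exact Or.inr c.2
      have Qi1 : NB (x (i+1)) = NB (x (i+2)) ∨ NB (x (i+1)) ⊂ NB (x (i+2)) := by
        rcases hAi1 with c|c|c|c
        · exact absurd (Or.inl c) hnq
        · exact Or.inl c.1
        · exact absurd (Or.inr c) hnq
        · exact Or.inr c.2
      apply hincB
      rcases Qi with e|s <;> rcases Qi1 with e'|s'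
      · rw [e, e']
      · rw [e]; exact s'.subset
      · rw [← e']; exact s.subset
      · exact (s.trans s').subset
  let b : ZMod h → Bool := fun i => decide (P i)
  have hb : ∀ i : ZMod h, b (i+1) = ! b i := by
    intro i
    calc b (i+1) = decide (¬ P i) := decide_eq_decide.mpr (hstep i)
    _ = ! b i := by simp [b]
  have hb2 : ∀ i : ZMod h, b (i + 2) = b i := by
    intro i
    have e : i + 2 = (i + 1) + 1 := by ring
    rw [e, hb, hb, Bool.not_not]
  have hbm : ∀ (m : ℕ) (i : ZMod h), b (i + ((2 * m : ℕ) : ZMod h)) = b i := by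
    intro m
    induction m with
    | zero => simp
    | succ m ih =>
      intro i
      have e : i + ((2 * (m+1) : ℕ) : ZMod h) = (i + 2) + ((2*m : ℕ) : ZMod h) := by
        push_cast; ring
      rw [e, ih, hb2]
  obtain ⟨m, hm⟩ := hodd
  have hz : ((0 : ZMod h) + 1) + ((2*m : ℕ) : ZMod h) = 0 := by
    have hh : ((2*m+1 : ℕ) : ZMod h) = 0 := by rw [← hm]; exact ZMod.natCast_self h
    push_cast at hh ⊢
    rw [zero_add, add_comm]
    exact hh
  have hfin := hbm m ((0 : ZMod h) + 1)
  rw [hz, hb] at hfin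
  simp at hfin
end

section
/- Let k > 2 and let H be a family of graphs such that every H ∈ H contains a cycle of length at most k. Then for every δ > 0 there exists an H-free graph G on n vertices (for some n) containing no homogeneous pair (P, Q) with |P|, |Q| ≥ δn. Consequently, the class of H-free graphs does not have the strong Erdős–Hajnal property. -/
/-!
Take the random graph `G(n, p)` with `p = d / n` and `d = 5 / ε²`. The expected number of cycles
of length at most `k` is at most the constant `∑_{3 ≤ ℓ ≤ k} d^ℓ`, while a union bound over the at
most `4^n` pairs of `⌈εn⌉`-sets, each homogeneous with probability `≤ 2 (1 - p)^(εn)² ≤ 2 e^(-5n)`,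
shows that with probability `≥ 3/4` there is no homogeneous pair of that size. By Markov's
inequality some outcome has no such pair and only `O(1)` vertices on short cycles. Deleting those
vertices gives a graph of girth `> k` — hence containing no graph with a cycle of length `≤ k` as
an induced subgraph — on `N ≥ n / 2` vertices, without homogeneous pairs of size `2εN`.
-/

open Finset

section Bernoulli

variable {E : Type*} [Fintype E]

def bernoulliWeight (p : ℝ) (ω : E → Bool) : ℝ := ∏ e, if ω e then p else 1 - p

variable {p : ℝ}

lemma bernoulliWeight_nonneg (hp₀ : 0 ≤ p) (hp₁ : p ≤ 1) (ω : E → Bool) :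
    0 ≤ bernoulliWeight p ω :=
  prod_nonneg fun e _ => by split <;> linarith

variable [DecidableEq E]

open Classical in
noncomputable def bernoulliProb (p : ℝ) (A : (E → Bool) → Prop) : ℝ :=
  ∑ ω with A ω, bernoulliWeight p ω

lemma bernoulliProb_forall_eq (p : ℝ) (S : Finset E) (b : Bool) :
    bernoulliProb p (fun ω => ∀ e ∈ S, ω e = b) = (if b then p else 1 - p) ^ #S := by
  let f : E → Bool → ℝ := fun e x =>
    (if x then p else 1 - p) * if e ∈ S → x = b then 1 else 0
  have hω : ∀ ω : E → Bool, (if ∀ e ∈ S, ω e = b then bernoulliWeight p ω else 0)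
      = ∏ e, f e (ω e) := by
    intro ω
    rw [prod_mul_distrib, prod_boole, bernoulliWeight]
    simp
  have he : ∀ e, ∑ x, f e x = if e ∈ S then (if b then p else 1 - p) else 1 := by
    intro e
    by_cases heS : e ∈ S <;> cases b <;> simp [f, heS]
  rw [bernoulliProb, sum_filter]
  refine (sum_congr rfl fun ω _ => by convert hω ω).trans ?_
  rw [← Fintype.prod_sum]
  simp only [he, prod_ite_mem, univ_inter, prod_const]

lemma bernoulliProb_true (p : ℝ) : bernoulliProb (E := E) p (fun _ => True) = 1 := by
  simpa using bernoulliProb_forall_eq (E := E) p ∅ true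

lemma bernoulliProb_mono (hp₀ : 0 ≤ p) (hp₁ : p ≤ 1) {A B : (E → Bool) → Prop}
    (h : ∀ ω, A ω → B ω) : bernoulliProb p A ≤ bernoulliProb p B := by
  classical
  exact sum_le_sum_of_subset_of_nonneg (fun ω => by simpa using h ω)
    fun ω _ _ => bernoulliWeight_nonneg hp₀ hp₁ ω

lemma bernoulliProb_or_le (hp₀ : 0 ≤ p) (hp₁ : p ≤ 1) (A B : (E → Bool) → Prop) :
    bernoulliProb p (fun ω => A ω ∨ B ω) ≤ bernoulliProb p A + bernoulliProb p B := by
  classical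
  simp only [bernoulliProb, filter_or]
  rw [← sum_union_inter]
  exact le_add_of_nonneg_right (sum_nonneg fun ω _ => bernoulliWeight_nonneg hp₀ hp₁ ω)

lemma bernoulliProb_eq_zero {A : (E → Bool) → Prop} (h : ∀ ω, ¬ A ω) :
    bernoulliProb p A = 0 := by
  classical
  simp [bernoulliProb, h]

open Classical in
lemma sum_bernoulliWeight_mul_card_filter {α : Type*} (s : Finset α)
    (A : (E → Bool) → α → Prop) :
    ∑ ω, bernoulliWeight p ω * (#{x ∈ s | A ω x} : ℝ) = ∑ x ∈ s, bernoulliProb p (A · x) := by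
  simp only [card_filter, Nat.cast_sum, mul_sum, bernoulliProb, sum_filter]
  rw [sum_comm]
  simp

lemma exists_eq_zero_and_lt_of_expectation (hp₀ : 0 ≤ p) (hp₁ : p ≤ 1)
    (X Y : (E → Bool) → ℕ) {t : ℝ} (ht : 0 < t)
    (h : ∑ ω, bernoulliWeight p ω * X ω + (∑ ω, bernoulliWeight p ω * Y ω) / t < 1) :
    ∃ ω, X ω = 0 ∧ (Y ω : ℝ) < t := by
  have hsum : ∑ ω : E → Bool, bernoulliWeight p ω * 1 = 1 := by
    simpa [bernoulliProb] using bernoulliProb_true (E := E) p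
  rw [sum_div, ← sum_add_distrib, ← hsum] at h
  obtain ⟨ω, -, hω⟩ := exists_lt_of_sum_lt h
  rw [mul_div_assoc, ← mul_add] at hω
  have hZ := lt_of_mul_lt_mul_left hω (bernoulliWeight_nonneg hp₀ hp₁ ω)
  have hY : (0 : ℝ) ≤ Y ω / t := by positivity
  have hX : (X ω : ℝ) < 1 := by linarith
  refine ⟨ω, Nat.lt_one_iff.mp (by exact_mod_cast hX), ?_⟩
  rw [← div_lt_one ht]
  linarith [(Nat.cast_nonneg (X ω) : (0 : ℝ) ≤ X ω)]

end Bernoulli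

lemma coe_finRotate_eq_ite {ℓ : ℕ} (i : Fin ℓ) :
    (finRotate ℓ i : ℕ) = if (i : ℕ) + 1 = ℓ then (0 : ℕ) else (i : ℕ) + 1 := by
  obtain ⟨n, rfl⟩ : ∃ n, ℓ = n + 1 := ⟨ℓ - 1, by have := i.pos; omega⟩
  simp only [coe_finRotate, Fin.ext_iff, Fin.val_last, Nat.add_right_cancel_iff]

lemma finRotate_finRotate_ne {ℓ : ℕ} (hℓ : 3 ≤ ℓ) (i : Fin ℓ) :
    finRotate ℓ (finRotate ℓ i) ≠ i := by
  intro h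
  have := congrArg Fin.val h
  simp only [coe_finRotate_eq_ite] at this
  split_ifs at this <;> omega

namespace SimpleGraph

variable {V W : Type*}

def IsHomogeneousPair (G : SimpleGraph V) (P Q : Finset V) : Prop :=
  Disjoint P Q ∧ ((∀ x ∈ P, ∀ y ∈ Q, G.Adj x y) ∨ ∀ x ∈ P, ∀ y ∈ Q, ¬ G.Adj x y)

lemma IsHomogeneousPair.mono {G : SimpleGraph V} {P Q P' Q' : Finset V}
    (h : G.IsHomogeneousPair P Q) (hP : P' ⊆ P) (hQ : Q' ⊆ Q) : G.IsHomogeneousPair P' Q' :=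
  ⟨h.1.mono hP hQ, h.2.imp (fun h x hx y hy => h x (hP hx) y (hQ hy))
    fun h x hx y hy => h x (hP hx) y (hQ hy)⟩

lemma IsHomogeneousPair.map {G : SimpleGraph V} (f : W ↪ V) {P Q : Finset W}
    (h : (G.comap f).IsHomogeneousPair P Q) : G.IsHomogeneousPair (P.map f) (Q.map f) :=
  ⟨(disjoint_map f).mpr h.1, h.2.imp (fun h => by simpa using h) fun h => by simpa using h⟩

def IsCycleMap (G : SimpleGraph V) {ℓ : ℕ} (c : Fin ℓ → V) : Prop :=
  Function.Injective c ∧ ∀ i, G.Adj (c i) (c (finRotate ℓ i))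

lemma Walk.IsCycle.isCycleMap_getVert {G : SimpleGraph V} {v : V} {w : G.Walk v v}
    (hw : w.IsCycle) : G.IsCycleMap fun i : Fin w.length => w.getVert i := by
  have h3 := hw.three_le_length
  refine ⟨fun i j hij => Fin.ext (hw.getVert_injOn' (show (i : ℕ) ≤ w.length - 1 by omega)
    (show (j : ℕ) ≤ w.length - 1 by omega) hij), fun i => ?_⟩
  show G.Adj (w.getVert i) (w.getVert (finRotate _ i))
  rw [coe_finRotate_eq_ite]
  split_ifs with h
  · simpa [h] using w.adj_getVert_succ i.isLt
  · exact w.adj_getVert_succ i.isLt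

open Classical in
noncomputable def shortCycleVertices (G : SimpleGraph V) [Fintype V] (k : ℕ) : Finset V :=
  {v | ∃ w : G.Walk v v, w.IsCycle ∧ w.length ≤ k}

open Classical in
lemma card_shortCycleVertices_le [Fintype V] (G : SimpleGraph V) (k : ℕ) :
    #(G.shortCycleVertices k) ≤ ∑ ℓ ∈ Icc 3 k, #{c : Fin ℓ → V | G.IsCycleMap c} := by
  calc #(G.shortCycleVertices k)
      ≤ #((Icc 3 k).biUnion fun ℓ =>
          ({v | ∃ w : G.Walk v v, w.IsCycle ∧ w.length = ℓ} : Finset V)) := by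
        refine card_le_card fun v hv => ?_
        simp only [shortCycleVertices, mem_filter, mem_univ, true_and] at hv
        obtain ⟨w, hw, hk⟩ := hv
        exact mem_biUnion.2 ⟨w.length, mem_Icc.2 ⟨hw.three_le_length, hk⟩,
          mem_filter.2 ⟨mem_univ _, w, hw, rfl⟩⟩
    _ ≤ ∑ ℓ ∈ Icc 3 k, #({v | ∃ w : G.Walk v v, w.IsCycle ∧ w.length = ℓ} : Finset V) :=
        card_biUnion_le
    _ ≤ _ := by
        refine sum_le_sum fun ℓ hℓ => card_le_card_of_surjOn
          (fun c => c ⟨0, by have := (mem_Icc.1 hℓ).1; omega⟩) fun v hv => ?_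
        simp only [coe_filter, mem_univ, true_and, Set.mem_ofPred_eq] at hv
        obtain ⟨w, hw, rfl⟩ := hv
        exact ⟨_, by simpa using hw.isCycleMap_getVert, by simp⟩

lemma lt_egirth_comap_of_forall_notMem (G : SimpleGraph V) [Fintype V] (k : ℕ) (f : W ↪ V)
    (hf : ∀ x, f x ∉ G.shortCycleVertices k) : (k : ℕ∞) < (G.comap f).egirth := by
  rw [← ENat.add_one_le_iff (ENat.natCast_ne_top k), le_egirth]
  intro x w hw
  by_contra! hlen
  apply hf x
  let φ := Embedding.comap f G
  have hw' : (w.map φ.toHom).IsCycle := (Walk.isCycle_map_iff_of_injective φ.injective).2 hw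
  simp only [shortCycleVertices, mem_filter, mem_univ, true_and]
  have : w.length < k + 1 := by exact_mod_cast hlen
  exact ⟨w.map φ.toHom, hw', (Walk.length_map _ _).trans_le (by omega)⟩

end SimpleGraph

open SimpleGraph

section RandomGraph

variable {V : Type*} [DecidableEq V] {p : ℝ}

/-- Diagonal coordinates of `Sym2 V` are ignored, so under `bernoulliWeight p` this is `G(n, p)`. -/
def edgeGraph (ω : Sym2 V → Bool) : SimpleGraph V := fromEdgeSet {e | ω e}

lemma card_image_sym2Mk_product {P Q : Finset V} (h : Disjoint P Q) :
    #((P ×ˢ Q).image fun x => s(x.1, x.2)) = #P * #Q := by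
  rw [card_image_of_injOn, card_product]
  rintro ⟨a, b⟩ hab ⟨c, d⟩ hcd heq
  simp only [coe_product, Set.mem_prod, mem_coe] at hab hcd
  rcases Sym2.eq_iff.mp heq with ⟨rfl, rfl⟩ | ⟨rfl, rfl⟩
  · rfl
  · exact absurd hcd.2 (disjoint_left.mp h hab.1)

lemma card_image_sym2Mk_finRotate {ℓ : ℕ} (hℓ : 3 ≤ ℓ) {c : Fin ℓ → V}
    (hc : Function.Injective c) :
    #(univ.image fun i => s(c i, c (finRotate ℓ i))) = ℓ := by
  rw [card_image_of_injective _ ?_, card_univ, Fintype.card_fin]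
  intro i j hij
  rcases Sym2.eq_iff.mp hij with ⟨h, -⟩ | ⟨h₁, h₂⟩
  · exact hc h
  · exact absurd (by rw [← hc h₁]; exact hc h₂) (finRotate_finRotate_ne hℓ j)

lemma bernoulliProb_isHomogeneousPair_le [Fintype V] (hp₀ : 0 ≤ p) (hp₁ : p ≤ 1)
    (P Q : Finset V) :
    bernoulliProb p (fun ω => (edgeGraph ω).IsHomogeneousPair P Q)
      ≤ p ^ (#P * #Q) + (1 - p) ^ (#P * #Q) := by
  by_cases hPQ : Disjoint P Q
  swap
  · rw [bernoulliProb_eq_zero fun ω hω => hPQ hω.1]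
    exact add_nonneg (pow_nonneg hp₀ _) (pow_nonneg (sub_nonneg.2 hp₁) _)
  set S := (P ×ˢ Q).image fun x => s(x.1, x.2)
  have hS : ∀ ω, (edgeGraph ω).IsHomogeneousPair P Q →
      (∀ e ∈ S, ω e = true) ∨ ∀ e ∈ S, ω e = false := by
    rintro ω ⟨-, hadj | hnadj⟩
    · refine .inl ?_
      simp only [S, mem_image, mem_product, Prod.exists, forall_exists_index, and_imp]
      rintro e a b ha hb rfl
      exact ((fromEdgeSet_adj _).1 (hadj a ha b hb)).1
    · refine .inr ?_
      simp only [S, mem_image, mem_product, Prod.exists, forall_exists_index, and_imp]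
      rintro e a b ha hb rfl
      have hne : a ≠ b := fun hab => disjoint_left.mp hPQ ha (hab ▸ hb)
      simpa [edgeGraph, hne] using hnadj a ha b hb
  calc _ ≤ _ := bernoulliProb_mono hp₀ hp₁ hS
    _ ≤ _ := bernoulliProb_or_le hp₀ hp₁ _ _
    _ = _ := by
      rw [bernoulliProb_forall_eq, bernoulliProb_forall_eq, card_image_sym2Mk_product hPQ]
      simp

lemma bernoulliProb_isCycleMap_le [Fintype V] (hp₀ : 0 ≤ p) (hp₁ : p ≤ 1) {ℓ : ℕ}
    (hℓ : 3 ≤ ℓ) (c : Fin ℓ → V) :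
    bernoulliProb p (fun ω => (edgeGraph ω).IsCycleMap c) ≤ p ^ ℓ := by
  by_cases hc : Function.Injective c
  swap
  · rw [bernoulliProb_eq_zero fun ω hω => hc hω.1]
    positivity
  calc _ ≤ bernoulliProb p
        (fun ω => ∀ e ∈ univ.image fun i => s(c i, c (finRotate ℓ i)), ω e = true) :=
        bernoulliProb_mono hp₀ hp₁ fun ω hω => by
          simpa using fun i => ((fromEdgeSet_adj _).1 (hω.2 i)).1
    _ = p ^ ℓ := by rw [bernoulliProb_forall_eq, card_image_sym2Mk_finRotate hℓ hc]; rfl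

open Classical in
lemma expectation_card_homogeneousPairs_le [Fintype V] (hp₀ : 0 ≤ p) (hp₁ : p ≤ 1) (m : ℕ) :
    ∑ ω : Sym2 V → Bool, bernoulliWeight p ω *
      (#{PQ ∈ powersetCard m univ ×ˢ powersetCard m univ |
        (edgeGraph ω).IsHomogeneousPair PQ.1 PQ.2} : ℝ)
      ≤ 4 ^ Fintype.card V * (p ^ (m * m) + (1 - p) ^ (m * m)) := by
  rw [sum_bernoulliWeight_mul_card_filter]
  calc _ ≤ ∑ _PQ ∈ powersetCard m (univ : Finset V) ×ˢ powersetCard m univ,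
        (p ^ (m * m) + (1 - p) ^ (m * m)) := by
        refine sum_le_sum fun PQ hPQ => ?_
        obtain ⟨hP, hQ⟩ := mem_product.1 hPQ
        have := bernoulliProb_isHomogeneousPair_le hp₀ hp₁ PQ.1 PQ.2
        rwa [(mem_powersetCard.1 hP).2, (mem_powersetCard.1 hQ).2] at this
    _ ≤ _ := by
        rw [sum_const, nsmul_eq_mul, card_product, card_powersetCard, card_univ]
        gcongr
        have := Nat.choose_le_two_pow (Fintype.card V) m
        calc (((Fintype.card V).choose m * (Fintype.card V).choose m : ℕ) : ℝ)
            ≤ ((2 ^ Fintype.card V * 2 ^ Fintype.card V : ℕ) : ℝ) := by gcongr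
          _ = (4 : ℝ) ^ Fintype.card V := by push_cast; rw [← mul_pow]; norm_num

open Classical in
lemma expectation_card_cycleMaps_le [Fintype V] (hp₀ : 0 ≤ p) (hp₁ : p ≤ 1) (k : ℕ) :
    ∑ ω : Sym2 V → Bool, bernoulliWeight p ω *
      ((∑ ℓ ∈ Icc 3 k, #{c : Fin ℓ → V | (edgeGraph ω).IsCycleMap c} : ℕ) : ℝ)
      ≤ ∑ ℓ ∈ Icc 3 k, (Fintype.card V * p) ^ ℓ := by
  simp only [Nat.cast_sum, mul_sum]
  rw [sum_comm]
  refine sum_le_sum fun ℓ hℓ => ?_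
  rw [sum_bernoulliWeight_mul_card_filter]
  calc _ ≤ ∑ _c : Fin ℓ → V, p ^ ℓ :=
        sum_le_sum fun c _ => bernoulliProb_isCycleMap_le hp₀ hp₁ (mem_Icc.1 hℓ).1 c
    _ = _ := by simp [mul_pow]

theorem exists_forall_not_isHomogeneousPair_card_shortCycleVertices_lt [Fintype V]
    (hp₀ : 0 ≤ p) (hp₁ : p ≤ 1) (m k : ℕ) {t : ℝ} (ht : 0 < t)
    (h : 4 ^ Fintype.card V * (p ^ (m * m) + (1 - p) ^ (m * m))
      + (∑ ℓ ∈ Icc 3 k, (Fintype.card V * p) ^ ℓ) / t < 1) :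
    ∃ G : SimpleGraph V, (∀ P Q : Finset V, #P = m → #Q = m → ¬ G.IsHomogeneousPair P Q) ∧
      (#(G.shortCycleVertices k) : ℝ) < t := by
  classical
  obtain ⟨ω, hX, hY⟩ := exists_eq_zero_and_lt_of_expectation hp₀ hp₁
    (fun ω => #{PQ ∈ powersetCard m univ ×ˢ powersetCard m univ |
      (edgeGraph ω).IsHomogeneousPair PQ.1 PQ.2})
    (fun ω => ∑ ℓ ∈ Icc 3 k, #{c : Fin ℓ → V | (edgeGraph ω).IsCycleMap c}) ht
    (by
      refine (add_le_add (expectation_card_homogeneousPairs_le hp₀ hp₁ m) ?_).trans_lt h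
      exact div_le_div_of_nonneg_right (expectation_card_cycleMaps_le hp₀ hp₁ k) ht.le)
  refine ⟨edgeGraph ω, fun P Q hP hQ hPQ => ?_,
    lt_of_le_of_lt (by exact_mod_cast card_shortCycleVertices_le _ k) hY⟩
  exact filter_eq_empty_iff.1 (card_eq_zero.1 hX) (x := (P, Q))
    (mem_product.2 ⟨mem_powersetCard_univ.2 hP, mem_powersetCard_univ.2 hQ⟩) hPQ

end RandomGraph

lemma four_pow_mul_add_pow_le {p : ℝ} (hp₀ : 0 ≤ p) (hp : p ≤ 1 / 2) {n M : ℕ} (hn : 1 ≤ n)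
    (hM : 5 * n ≤ p * M) : 4 ^ n * (p ^ M + (1 - p) ^ M) ≤ 1 / 4 := by
  have hpq : p ^ M ≤ (1 - p) ^ M := pow_le_pow_left₀ hp₀ (by linarith) M
  have hexp : (1 - p) ^ M ≤ Real.exp (-5) ^ n := by
    calc (1 - p) ^ M ≤ Real.exp (-p) ^ M :=
          pow_le_pow_left₀ (by linarith) (Real.one_sub_le_exp_neg p) M
      _ = Real.exp (-(p * M)) := by rw [← Real.exp_nat_mul]; ring_nf
      _ ≤ Real.exp (-5) ^ n := by rw [← Real.exp_nat_mul]; exact Real.exp_le_exp.2 (by linarith)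
  have he : 32 ≤ Real.exp 5 := by
    calc (32 : ℝ) = 2 ^ 5 := by norm_num
      _ ≤ Real.exp 1 ^ 5 :=
          pow_le_pow_left₀ (by norm_num) (by linarith [Real.add_one_le_exp 1]) 5
      _ = Real.exp 5 := by rw [← Real.exp_nat_mul]; norm_num
  have h8 : 4 * Real.exp (-5) ≤ 1 / 8 := by
    rw [Real.exp_neg, ← div_eq_mul_inv, div_le_div_iff₀ (by positivity) (by norm_num)]
    linarith
  calc 4 ^ n * (p ^ M + (1 - p) ^ M) ≤ 4 ^ n * (2 * Real.exp (-5) ^ n) := by gcongr; linarith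
    _ = 2 * (4 * Real.exp (-5)) ^ n := by ring
    _ ≤ 2 * (1 / 8) ^ n := by gcongr
    _ ≤ 2 * (1 / 8) := by gcongr; exact pow_le_of_le_one (by norm_num) (by norm_num) (by omega)
    _ = 1 / 4 := by norm_num

theorem exists_no_linear_homogeneousPair_card_shortCycleVertices_lt (k : ℕ) {ε : ℝ}
    (hε : 0 < ε) :
    ∃ t : ℝ, 0 < t ∧ ∀ n : ℕ, 10 / ε ^ 2 ≤ n → ∃ G : SimpleGraph (Fin n),
      (¬ ∃ P Q, G.IsHomogeneousPair P Q ∧ ε * n ≤ #P ∧ ε * n ≤ #Q) ∧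
        (#(G.shortCycleVertices k) : ℝ) < t := by
  -- `p = d / n` keeps the expected number of short cycles below `C`, and `p ⌈εn⌉² ≥ 5n`.
  set d := 5 / ε ^ 2
  set C := ∑ ℓ ∈ Icc 3 k, d ^ ℓ with hCdef
  have hC : 0 ≤ C := sum_nonneg fun _ _ => by positivity
  refine ⟨2 * C + 1, by linarith, fun n hn => ?_⟩
  have hn₀ : (0 : ℝ) < n := lt_of_lt_of_le (by positivity) hn
  set p := d / n
  set m := ⌈ε * n⌉₊
  have hp₀ : 0 ≤ p := by positivity
  have hp : p ≤ 1 / 2 := by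
    rw [div_le_iff₀ hn₀]
    have : 10 / ε ^ 2 = 2 * d := by ring
    linarith
  have hM : 5 * n ≤ p * (m * m : ℕ) := by
    have hm : ε * n ≤ m := Nat.le_ceil _
    have : p * (ε * n) ^ 2 = 5 * n := by simp only [p, d]; field_simp
    push_cast
    nlinarith [mul_le_mul hm hm (by positivity) (by positivity)]
  obtain ⟨G, hG, hGt⟩ := exists_forall_not_isHomogeneousPair_card_shortCycleVertices_lt
    (V := Fin n) hp₀ (by linarith) m k (t := 2 * C + 1) (by linarith) (by
      rw [Fintype.card_fin, show (n : ℝ) * p = d by simp only [p]; field_simp, ← hCdef]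
      have hX := four_pow_mul_add_pow_le hp₀ hp (Nat.cast_pos.1 hn₀) hM
      have hY : C / (2 * C + 1) < 1 / 2 := by rw [div_lt_iff₀ (by linarith)]; linarith
      linarith)
  refine ⟨G, ?_, hGt⟩
  rintro ⟨P, Q, hPQ, hP, hQ⟩
  obtain ⟨P', hP'P, hP'⟩ := exists_subset_card_eq (Nat.ceil_le.2 hP)
  obtain ⟨Q', hQ'Q, hQ'⟩ := exists_subset_card_eq (Nat.ceil_le.2 hQ)
  exact hG P' Q' hP' hQ' (hPQ.mono hP'P hQ'Q)

theorem exists_lt_egirth_no_linear_homogeneousPair (k : ℕ) {δ : ℝ} (hδ : 0 < δ) :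
    ∃ (N : ℕ) (G : SimpleGraph (Fin N)), 2 ≤ N ∧ (k : ℕ∞) < G.egirth ∧
      ¬ ∃ P Q, G.IsHomogeneousPair P Q ∧ δ * N ≤ #P ∧ δ * N ≤ #Q := by
  obtain ⟨t, ht, hgraph⟩ :=
    exists_no_linear_homogeneousPair_card_shortCycleVertices_lt k (half_pos hδ)
  set n := ⌈10 / (δ / 2) ^ 2 + 2 * t⌉₊ + 4
  have hn : 10 / (δ / 2) ^ 2 + 2 * t + 4 ≤ n := by
    simp only [n]; push_cast; linarith [Nat.le_ceil (10 / (δ / 2) ^ 2 + 2 * t)]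
  have hpos : 0 ≤ 10 / (δ / 2) ^ 2 := by positivity
  obtain ⟨G₀, hG₀, hD⟩ := hgraph n (by linarith)
  -- fewer than `t ≤ n / 2` vertices are deleted
  set R := (G₀.shortCycleVertices k)ᶜ
  set f := (R.orderEmbOfFin rfl).toEmbedding
  have hR : (n : ℝ) - t ≤ #R := by
    have hle := card_le_univ (G₀.shortCycleVertices k)
    rw [Fintype.card_fin] at hle
    rw [card_compl, Fintype.card_fin, Nat.cast_sub hle]
    linarith
  refine ⟨#R, G₀.comap f, ?_, lt_egirth_comap_of_forall_notMem G₀ k f fun x => ?_, ?_⟩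
  · exact_mod_cast (by linarith : (2 : ℝ) ≤ #R)
  · exact mem_compl.1 (R.orderEmbOfFin_mem rfl x)
  · rintro ⟨P, Q, hPQ, hP, hQ⟩
    have hscale : δ / 2 * n ≤ δ * #R := by
      nlinarith [mul_le_mul_of_nonneg_left (by linarith : (n : ℝ) / 2 ≤ #R) hδ.le]
    refine hG₀ ⟨P.map f, Q.map f, hPQ.map f, ?_, ?_⟩ <;> rw [card_map] <;> linarith

theorem stmt_17_general (k : ℕ)
    (ι : Type) (Vt : ι → Type) (H : ∀ i, SimpleGraph (Vt i))
    (hcyc : ∀ i, ∃ (v : Vt i) (w : (H i).Walk v v), w.IsCycle ∧ w.length ≤ k) :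
    (∀ δ : ℝ, 0 < δ →
      ∃ (n : ℕ) (G : SimpleGraph (Fin n)),
        (∀ i, ¬ ∃ f : Vt i → Fin n, Function.Injective f ∧
          ∀ a b : Vt i, (H i).Adj a b ↔ G.Adj (f a) (f b)) ∧
        ¬ ∃ P Q : Finset (Fin n), P.Nonempty ∧ Q.Nonempty ∧ Disjoint P Q ∧
          ((∀ p ∈ P, ∀ q ∈ Q, G.Adj p q) ∨ (∀ p ∈ P, ∀ q ∈ Q, ¬ G.Adj p q)) ∧
          δ * n ≤ P.card ∧ δ * n ≤ Q.card) ∧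
    ¬ ∃ δ : ℝ, 0 < δ ∧
      ∀ (n : ℕ) (G : SimpleGraph (Fin n)),
        (∀ i, ¬ ∃ f : Vt i → Fin n, Function.Injective f ∧
          ∀ a b : Vt i, (H i).Adj a b ↔ G.Adj (f a) (f b)) →
        2 ≤ n →
        ∃ P Q : Finset (Fin n), P.Nonempty ∧ Q.Nonempty ∧ Disjoint P Q ∧
          ((∀ p ∈ P, ∀ q ∈ Q, G.Adj p q) ∨ (∀ p ∈ P, ∀ q ∈ Q, ¬ G.Adj p q)) ∧
          δ * n ≤ P.card ∧ δ * n ≤ Q.card := by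
  have hfree : ∀ {n} (G : SimpleGraph (Fin n)), (k : ℕ∞) < G.egirth → ∀ i,
      ¬ ∃ f : Vt i → Fin n, Function.Injective f ∧ ∀ a b, (H i).Adj a b ↔ G.Adj (f a) (f b) := by
    rintro n G hG i ⟨f, hf, hadj⟩
    obtain ⟨v, w, hw, hwk⟩ := hcyc i
    have hHG : H i ⊑ G := Embedding.isContained ⟨⟨f, hf⟩, (hadj _ _).symm⟩
    exact (hG.trans_le (hHG.egirth_le.trans (egirth_le_length hw))).not_ge
      (by exact_mod_cast hwk)
  refine ⟨fun δ hδ => ?_, fun ⟨δ, hδ, hEH⟩ => ?_⟩ <;>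
    obtain ⟨n, G, hn, hG, hPQ⟩ := exists_lt_egirth_no_linear_homogeneousPair k hδ
  · exact ⟨n, G, hfree G hG, fun ⟨P, Q, _, _, hd, hh, hP, hQ⟩ => hPQ ⟨P, Q, ⟨hd, hh⟩, hP, hQ⟩⟩
  · obtain ⟨P, Q, -, -, hd, hh, hP, hQ⟩ := hEH n G (hfree G hG) hn
    exact hPQ ⟨P, Q, ⟨hd, hh⟩, hP, hQ⟩

/-- Lemma 6.1 (case (P1)): let `k > 2` and let `ℋ` be a family of (finite) graphs
each of which contains a cycle of length at most `k`. Then for every `δ > 0`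
there is an `ℋ`-free graph `G` on `n` vertices (for some `n`) with no homogeneous
pair `(P, Q)` with `|P|, |Q| ≥ δn`. Consequently, the class of `ℋ`-free graphs
does not have the strong Erdős–Hajnal property. -/
theorem stmt_17 (k : ℕ) (hk : 2 < k)
    (ι : Type) (Vt : ι → Type) [∀ i, Fintype (Vt i)] (H : ∀ i, SimpleGraph (Vt i))
    (hcyc : ∀ i, ∃ (v : Vt i) (w : (H i).Walk v v), w.IsCycle ∧ w.length ≤ k) :
    (∀ δ : ℝ, 0 < δ →
      ∃ (n : ℕ) (G : SimpleGraph (Fin n)),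
        (∀ i, ¬ ∃ f : Vt i → Fin n, Function.Injective f ∧
          ∀ a b : Vt i, (H i).Adj a b ↔ G.Adj (f a) (f b)) ∧
        ¬ ∃ P Q : Finset (Fin n), P.Nonempty ∧ Q.Nonempty ∧ Disjoint P Q ∧
          ((∀ p ∈ P, ∀ q ∈ Q, G.Adj p q) ∨ (∀ p ∈ P, ∀ q ∈ Q, ¬ G.Adj p q)) ∧
          δ * n ≤ P.card ∧ δ * n ≤ Q.card) ∧
    ¬ ∃ δ : ℝ, 0 < δ ∧
      ∀ (n : ℕ) (G : SimpleGraph (Fin n)),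
        (∀ i, ¬ ∃ f : Vt i → Fin n, Function.Injective f ∧
          ∀ a b : Vt i, (H i).Adj a b ↔ G.Adj (f a) (f b)) →
        2 ≤ n →
        ∃ P Q : Finset (Fin n), P.Nonempty ∧ Q.Nonempty ∧ Disjoint P Q ∧
          ((∀ p ∈ P, ∀ q ∈ Q, G.Adj p q) ∨ (∀ p ∈ P, ∀ q ∈ Q, ¬ G.Adj p q)) ∧
          δ * n ≤ P.card ∧ δ * n ≤ Q.card :=
  stmt_17_general k ι Vt H hcyc
end
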